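/- arXiv:2408.09188 — 7 statements merged into one kernel-verified Lean document; each statement's English description precedes it below -/
import Mathlib

section
/- For every H ∈ (1/2, 1), the quantity ρ̂(H) := (1/4)·(9^{2H} − 8^{2H} − 2·6^{2H} + 4·4^{2H} − 2·2^{2H} − 1) is strictly positive; moreover ρ̂(H) = ρ_2(H) + ρ_2(H)² − ρ_1(H)² − ρ_1(H)·ρ_3(H), and ρ̂(1/2) = ρ̂(1) = 0. -/
open Real Set

/-- Autocovariance function of fractional Gaussian noise with Hurst parameter `H`:
`ρ_k(H) = ((k+1)^{2H} − 2·k^{2H} + (k−1)^{2H})/2` for `k ≥ 1`, and `ρ_0(H) = 1`. -/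
noncomputable def rho (H : ℝ) (k : ℕ) : ℝ :=
  if k = 0 then 1
  else (((k : ℝ) + 1) ^ (2 * H) - 2 * (k : ℝ) ^ (2 * H) + ((k : ℝ) - 1) ^ (2 * H)) / 2

/-- `ρ̂(H) = (1/4)(9^{2H} − 8^{2H} − 2·6^{2H} + 4·4^{2H} − 2·2^{2H} − 1)`. -/
noncomputable def rhoHat (H : ℝ) : ℝ :=
  (1 / 4) * ((9 : ℝ) ^ (2 * H) - (8 : ℝ) ^ (2 * H) - 2 * (6 : ℝ) ^ (2 * H)
    + 4 * (4 : ℝ) ^ (2 * H) - 2 * (2 : ℝ) ^ (2 * H) - 1)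

/-!
Write `ρ̂(H) = f(2H)/4` with `f(t) = 9^t - 8^t - 2·6^t + 4·4^t - 2·2^t - 1`. The coefficients
`1, -1, -2, 4, -2, -1` (bases in decreasing order) change sign three times, so by the Descartes
rule of signs for exponential sums `f` has at most three real zeros: multiplying by `s^t` does not
move the zeros, and differentiating afterwards multiplies the coefficient of `b^t` by `log (b s)`,
which removes the sign change straddling `1/s`; Rolle loses one zero per step.
Now `f(1) = f(2) = 0`, `f'(2) = 18 (5 log 3 - 8 log 2) < 0` because `3^5 < 2^8`, and `f(3) = 24`,
so `f` has a third zero in `(2, 3)` and is positive just left of `2`. Hence `f` has no zero on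
`(1, 2)` and is positive there.
-/

open Topology

theorem exists_strictMono_zeros_of_hasDerivAt {f f' : ℝ → ℝ} (hf : ∀ x, HasDerivAt f (f' x) x)
    {n : ℕ} {x : Fin (n + 1) → ℝ} (hx : StrictMono x) (hzero : ∀ i, f (x i) = 0) :
    ∃ y : Fin n → ℝ, StrictMono y ∧ ∀ i, f' (y i) = 0 := by
  have hrolle (i : Fin n) : ∃ c ∈ Ioo (x i.castSucc) (x i.succ), f' c = 0 :=
    exists_hasDerivAt_eq_zero (hx i.castSucc_lt_succ)
      (fun z _ => (hf z).continuousAt.continuousWithinAt) (by rw [hzero, hzero]) fun z _ => hf z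
  choose y hy hy0 using hrolle
  refine ⟨y, fun i j hij => ?_, hy0⟩
  calc y i < x i.succ := (hy i).2
    _ ≤ x j.castSucc := hx.monotone (Fin.succ_le_castSucc_iff.mpr hij)
    _ < y j := (hy j).1

section ExpSum

variable {ι : Type*} [Fintype ι]

noncomputable def expSum (c b : ι → ℝ) (t : ℝ) : ℝ :=
  ∑ i, c i * b i ^ t

theorem hasDerivAt_expSum (c : ι → ℝ) {b : ι → ℝ} (hb : ∀ i, 0 < b i) (t : ℝ) :
    HasDerivAt (expSum c b) (expSum (fun i => c i * log (b i)) b t) t := by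
  refine (HasDerivAt.fun_sum (u := Finset.univ) fun i _ =>
    (hasStrictDerivAt_const_rpow (hb i) t).hasDerivAt.const_mul (c i)).congr_deriv ?_
  exact Finset.sum_congr rfl fun i _ => by ring

theorem expSum_mul_rpow (c : ι → ℝ) {b : ι → ℝ} (hb : ∀ i, 0 ≤ b i) {s : ℝ} (hs : 0 ≤ s)
    (t : ℝ) : expSum c (fun i => b i * s) t = expSum c b t * s ^ t := by
  simp only [expSum, mul_rpow (hb _) hs, Finset.sum_mul, mul_assoc]

theorem exists_strictMono_zeros_expSum_rescale_deriv {c b : ι → ℝ} (hb : ∀ i, 0 < b i)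
    {s : ℝ} (hs : 0 < s) {n : ℕ} {x : Fin (n + 1) → ℝ} (hx : StrictMono x)
    (hzero : ∀ i, expSum c b (x i) = 0) :
    ∃ y : Fin n → ℝ, StrictMono y ∧
      ∀ i, expSum (fun i => c i * log (b i * s)) (fun i => b i * s) (y i) = 0 :=
  exists_strictMono_zeros_of_hasDerivAt (hasDerivAt_expSum c fun i => mul_pos (hb i) hs) hx
    fun i => by rw [expSum_mul_rpow c (fun i => (hb i).le) hs.le, hzero, zero_mul]

theorem continuous_expSum (c : ι → ℝ) {b : ι → ℝ} (hb : ∀ i, 0 < b i) :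
    Continuous (expSum c b) :=
  continuous_iff_continuousAt.2 fun t => (hasDerivAt_expSum c hb t).continuousAt

theorem expSum_pos [Nonempty ι] {c b : ι → ℝ} (hc : ∀ i, 0 < c i) (hb : ∀ i, 0 < b i)
    (t : ℝ) : 0 < expSum c b t :=
  Finset.sum_pos (fun i _ => mul_pos (hc i) (rpow_pos_of_pos (hb i) t)) Finset.univ_nonempty

end ExpSum

noncomputable def rhoHatExpSum : ℝ → ℝ :=
  expSum ![1, -1, -2, 4, -2, -1] ![9, 8, 6, 4, 2, 1]

theorem rhoHatExpSum_bases_pos : ∀ i, 0 < (![9, 8, 6, 4, 2, 1] : Fin 6 → ℝ) i := by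
  intro i
  fin_cases i <;> norm_num

theorem continuous_rhoHatExpSum : Continuous rhoHatExpSum :=
  continuous_expSum _ rhoHatExpSum_bases_pos

theorem rhoHatExpSum_apply (t : ℝ) :
    rhoHatExpSum t = 9 ^ t - 8 ^ t - 2 * 6 ^ t + 4 * 4 ^ t - 2 * 2 ^ t - 1 := by
  simp only [rhoHatExpSum, expSum, Fin.sum_univ_six, Matrix.cons_val]
  norm_num
  ring

theorem rhoHat_eq_rhoHatExpSum (H : ℝ) : rhoHat H = rhoHatExpSum (2 * H) / 4 := by
  rw [rhoHat, rhoHatExpSum_apply]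
  ring

theorem rhoHatExpSum_one : rhoHatExpSum 1 = 0 := by
  norm_num [rhoHatExpSum_apply]

theorem rhoHatExpSum_two : rhoHatExpSum 2 = 0 := by
  norm_num [rhoHatExpSum_apply]

theorem rhoHatExpSum_three : rhoHatExpSum 3 = 24 := by
  norm_num [rhoHatExpSum_apply]

theorem hasDerivAt_rhoHatExpSum_two :
    HasDerivAt rhoHatExpSum (18 * (5 * log 3 - 8 * log 2)) 2 := by
  have l9 : log 9 = 2 * log 3 := by rw [show (9 : ℝ) = 3 ^ 2 by norm_num, log_pow]; norm_num
  have l8 : log 8 = 3 * log 2 := by rw [show (8 : ℝ) = 2 ^ 3 by norm_num, log_pow]; norm_num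
  have l6 : log 6 = log 2 + log 3 := by rw [show (6 : ℝ) = 2 * 3 by norm_num, log_mul] <;> norm_num
  have l4 : log 4 = 2 * log 2 := by rw [show (4 : ℝ) = 2 ^ 2 by norm_num, log_pow]; norm_num
  refine (hasDerivAt_expSum ![1, -1, -2, 4, -2, -1] (b := ![9, 8, 6, 4, 2, 1])
    rhoHatExpSum_bases_pos 2).congr_deriv ?_
  simp only [expSum, Fin.sum_univ_six, Matrix.cons_val]
  norm_num [l9, l8, l6, l4]
  ring

theorem five_mul_log_three_lt : 5 * log 3 < 8 * log 2 := by
  have h : log ((3 : ℝ) ^ 5) < log ((2 : ℝ) ^ 8) := log_lt_log (by norm_num) (by norm_num)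
  simpa only [log_pow, Nat.cast_ofNat] using h

theorem rhoHatExpSum_sign_eq_near_two :
    ∀ᶠ t in 𝓝 2, SignType.sign (rhoHatExpSum t) = SignType.sign (2 - t) :=
  eventually_nhdsWithin_sign_eq_of_deriv_neg
    (by rw [hasDerivAt_rhoHatExpSum_two.deriv]; linarith [five_mul_log_three_lt])
    rhoHatExpSum_two

theorem exists_rhoHatExpSum_pos_Ioo : ∃ a ∈ Ioo 1 2, 0 < rhoHatExpSum a := by
  obtain ⟨a, hsign, ha⟩ := ((rhoHatExpSum_sign_eq_near_two.filter_mono nhdsWithin_le_nhds).and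
    (Ioo_mem_nhdsLT one_lt_two)).exists
  refine ⟨a, ha, ?_⟩
  rwa [sign_pos (sub_pos.2 ha.2), sign_eq_one_iff] at hsign

theorem exists_rhoHatExpSum_eq_zero_Ioo : ∃ w ∈ Ioo 2 3, rhoHatExpSum w = 0 := by
  obtain ⟨b, hsign, hb⟩ := ((rhoHatExpSum_sign_eq_near_two.filter_mono nhdsWithin_le_nhds).and
    (Ioo_mem_nhdsGT (by norm_num : (2 : ℝ) < 3))).exists
  have hneg : rhoHatExpSum b < 0 := by
    rwa [sign_neg (sub_neg.2 hb.1), sign_eq_neg_one_iff] at hsign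
  obtain ⟨w, hw, hw0⟩ := intermediate_value_Ioo hb.2.le continuous_rhoHatExpSum.continuousOn
    ⟨hneg, by rw [rhoHatExpSum_three]; norm_num⟩
  exact ⟨w, ⟨hb.1.trans hw.1, hw.2⟩, hw0⟩

theorem rhoHatExpSum_not_four_zeros {x : Fin 4 → ℝ} (hx : StrictMono x) :
    ¬ ∀ i, rhoHatExpSum (x i) = 0 := by
  intro hzero
  have hb := rhoHatExpSum_bases_pos
  -- The cumulative scales `1/3, 2/9, 16/135` are the reciprocals of `3, 9/2, 135/16`, which
  -- separate the bases at the three sign changes `4 | 2`, `6 | 4`, `9 | 8`.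
  obtain ⟨y₁, hy₁, hzero₁⟩ :=
    exists_strictMono_zeros_expSum_rescale_deriv hb (s := 1 / 3) (by norm_num) hx hzero
  obtain ⟨y₂, hy₂, hzero₂⟩ := exists_strictMono_zeros_expSum_rescale_deriv
    (fun i => mul_pos (hb i) (by norm_num)) (s := 2 / 3) (by norm_num) hy₁ hzero₁
  obtain ⟨y₃, -, hzero₃⟩ := exists_strictMono_zeros_expSum_rescale_deriv
    (fun i => mul_pos (mul_pos (hb i) (by norm_num)) (by norm_num)) (s := 8 / 15) (by norm_num)
    hy₂ hzero₂
  refine (expSum_pos (fun i => ?_) (fun i => ?_) (y₃ 0)).ne' (hzero₃ 0)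
  · fin_cases i <;> norm_num [mul_pos_iff, mul_neg_iff, log_pos_iff, log_neg_iff]
  · have := hb i
    positivity

theorem rhoHatExpSum_pos_of_mem_Ioo {t : ℝ} (ht : t ∈ Ioo 1 2) : 0 < rhoHatExpSum t := by
  obtain ⟨w, hw, hw0⟩ := exists_rhoHatExpSum_eq_zero_Ioo
  obtain ⟨a, ha, hpos⟩ := exists_rhoHatExpSum_pos_Ioo
  by_contra! hle
  obtain ⟨z, hz, hz0⟩ := isPreconnected_Ioo.intermediate_value ht ha
    continuous_rhoHatExpSum.continuousOn ⟨hle, hpos.le⟩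
  refine rhoHatExpSum_not_four_zeros (x := ![1, z, 2, w]) ?_ fun i => ?_
  · refine Fin.strictMono_iff_lt_succ.2 fun i => ?_
    fin_cases i
    exacts [hz.1, hz.2, hw.1]
  · fin_cases i
    exacts [rhoHatExpSum_one, hz0, rhoHatExpSum_two, hw0]

theorem rhoHat_eq_rho {H : ℝ} (hH : H ≠ 0) :
    rhoHat H = rho H 2 + rho H 2 ^ 2 - rho H 1 ^ 2 - rho H 1 * rho H 3 := by
  have h9 : (9 : ℝ) ^ (2 * H) = 3 ^ (2 * H) * 3 ^ (2 * H) := by rw [← mul_rpow] <;> norm_num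
  have h8 : (8 : ℝ) ^ (2 * H) = 2 ^ (2 * H) * 4 ^ (2 * H) := by rw [← mul_rpow] <;> norm_num
  have h6 : (6 : ℝ) ^ (2 * H) = 2 ^ (2 * H) * 3 ^ (2 * H) := by rw [← mul_rpow] <;> norm_num
  have h4 : (4 : ℝ) ^ (2 * H) = 2 ^ (2 * H) * 2 ^ (2 * H) := by rw [← mul_rpow] <;> norm_num
  simp only [rhoHat, rho]
  norm_num [zero_rpow (mul_ne_zero two_ne_zero hH), h9, h8, h6, h4]
  ring

theorem stmt_0 :
    (∀ H ∈ Ioo (1 / 2 : ℝ) 1, 0 < rhoHat H) ∧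
    (∀ H ∈ Ioo (1 / 2 : ℝ) 1,
      rhoHat H = rho H 2 + (rho H 2) ^ 2 - (rho H 1) ^ 2 - rho H 1 * rho H 3) ∧
    rhoHat (1 / 2) = 0 ∧ rhoHat 1 = 0 := by
  refine ⟨fun H hH => ?_, fun H hH => rhoHat_eq_rho (by linarith [hH.1]), ?_, ?_⟩
  · rw [rhoHat_eq_rhoHatExpSum]
    exact div_pos (rhoHatExpSum_pos_of_mem_Ioo ⟨by linarith [hH.1], by linarith [hH.2]⟩) four_pos
  · rw [rhoHat_eq_rhoHatExpSum]
    norm_num [rhoHatExpSum_one]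
  · rw [rhoHat_eq_rhoHatExpSum]
    norm_num [rhoHatExpSum_two]
end

section
/- For every H ∈ (1/2, 1), the inequality ρ_1²·ρ_2 − ρ_2³ + ρ_1·ρ_2·ρ_3 − ρ_1² + ρ_2 − ρ_1·ρ_3 > 0 holds, where ρ_k = ρ_k(H); equivalently, the numerator of the projection coefficient Γ_4^3 of fractional Gaussian noise is strictly positive. (This expression factors as (1 − ρ_2)·(ρ_2 + ρ_2² − ρ_1² − ρ_1·ρ_3).) -/
/-!
With `t = 2H ∈ (1, 2)`, `x = 2^t ∈ (2, 4)` and `y = 3^t`, the first factor is `(2x + 1 - y)/2`,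
positive because `2 (2/3)^t + (1/3)^t` decreases in `t` and equals `1` at `t = 2`. Four times the
second factor is `(y - x)^2 - (x^3 - 3x^2 + 2x + 1)`, which vanishes at both ends `x = 2, 4`.
Since `y = x · x^p` with `p = log₂(3/2)`, and `x ↦ x^p` is concave, it suffices to bound `x^p`
from below by its chords through the nodes `2, 3, 19/5, 4`. The node values are exact at `2` and `4`
(`3/2` and `9/4`) and bounded below via `p ≥ 31/53` at the inner nodes; on each piece what remains
is a polynomial inequality.
-/

open Real Set Finset

theorem ConcaveOn.sub_mul_add_sub_mul_le {s : Set ℝ} {f : ℝ → ℝ} (hf : ConcaveOn ℝ s f)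
    {a x b : ℝ} (ha : a ∈ s) (hb : b ∈ s) (hax : a ≤ x) (hxb : x ≤ b) :
    (b - x) * f a + (x - a) * f b ≤ (b - a) * f x := by
  rcases hax.eq_or_lt with rfl | hax
  · simp
  rcases hxb.eq_or_lt with rfl | hxb
  · simp
  have h := hf.slope_anti_adjacent ha hb hax hxb
  rw [div_le_div_iff₀ (sub_pos.2 hxb) (sub_pos.2 hax)] at h
  linarith

namespace Real

theorem three_rpow_lt_two_mul_two_rpow_add_one {t : ℝ} (ht : t < 2) :
    (3 : ℝ) ^ t < 2 * 2 ^ t + 1 := by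
  have h3 : (0 : ℝ) < 3 ^ t := by positivity
  have h2 : (2 / 3 : ℝ) ^ (2 : ℝ) < 2 ^ t / 3 ^ t := by
    calc (2 / 3 : ℝ) ^ (2 : ℝ) < (2 / 3) ^ t :=
          rpow_lt_rpow_of_exponent_gt (by norm_num) (by norm_num) ht
      _ = 2 ^ t / 3 ^ t := div_rpow (by norm_num) (by norm_num) t
  have h1 : (1 / 3 : ℝ) ^ (2 : ℝ) < 1 / 3 ^ t := by
    calc (1 / 3 : ℝ) ^ (2 : ℝ) < (1 / 3) ^ t :=
          rpow_lt_rpow_of_exponent_gt (by norm_num) (by norm_num) ht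
      _ = 1 / 3 ^ t := by rw [div_rpow (by norm_num) (by norm_num), one_rpow]
  rw [lt_div_iff₀ h3] at h1 h2
  norm_num at h1 h2
  linarith

theorem rpow_natCast_div_pow {r : ℝ} (hr : 0 ≤ r) (m : ℕ) {n : ℕ} (hn : n ≠ 0) :
    (r ^ ((m : ℝ) / n)) ^ n = r ^ m := by
  rw [← rpow_natCast, ← rpow_mul hr, div_mul_cancel₀ _ (Nat.cast_ne_zero.2 hn), rpow_natCast]

theorem le_rpow_logb_two_three_halves {q r : ℝ} (hq : 0 ≤ q) (hr : 1 ≤ r)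
    (h : q ^ 53 ≤ r ^ 31) : q ≤ r ^ logb 2 (3 / 2) := by
  have hp : (31 : ℝ) / 53 ≤ logb 2 (3 / 2) := by
    rw [le_logb_iff_rpow_le (by norm_num) (by norm_num),
      ← pow_le_pow_iff_left₀ (by positivity) (by norm_num) (by norm_num : 53 ≠ 0)]
    have h2 := rpow_natCast_div_pow (r := 2) (by norm_num) 31 (by norm_num : 53 ≠ 0)
    push_cast at h2
    rw [h2]
    norm_num
  calc q ≤ r ^ ((31 : ℝ) / 53) := by
        rw [← pow_le_pow_iff_left₀ hq (by positivity) (by norm_num : 53 ≠ 0)]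
        have hr' := rpow_natCast_div_pow (r := r) (by positivity) 31 (by norm_num : 53 ≠ 0)
        push_cast at hr'
        rwa [hr']
    _ ≤ r ^ logb 2 (3 / 2) := rpow_le_rpow_of_exponent_le hr hp

theorem two_rpow_logb_two_three_halves : (2 : ℝ) ^ logb 2 (3 / 2) = 3 / 2 :=
  rpow_logb (by norm_num) (by norm_num) (by norm_num)

theorem three_rpow_eq_two_rpow_mul (t : ℝ) :
    (3 : ℝ) ^ t = 2 ^ t * (2 ^ t) ^ logb 2 (3 / 2) := by
  rw [← rpow_mul (by norm_num), mul_comm t, rpow_mul (by norm_num),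
    two_rpow_logb_two_three_halves, ← mul_rpow (by norm_num) (by norm_num)]
  norm_num

theorem cubic_lt_sq_mul_rpow_logb_sub {x : ℝ} (h2 : 2 < x) (h4 : x < 4) :
    x ^ 3 - 3 * x ^ 2 + 2 * x + 1 < (x * x ^ logb 2 (3 / 2) - x) ^ 2 := by
  set p := logb 2 (3 / 2)
  suffices ∃ L, 1 ≤ L ∧ L ≤ x ^ p ∧ x ^ 3 - 3 * x ^ 2 + 2 * x + 1 < (x * L - x) ^ 2 by
    obtain ⟨L, hL1, hLp, hL⟩ := this
    exact hL.trans_le (pow_le_pow_left₀ (by nlinarith) (by nlinarith) 2)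
  have chord {a b fa fb : ℝ} (ha : 0 ≤ a) (hax : a ≤ x) (hxb : x ≤ b) (hab : a < b)
      (hfa : fa ≤ a ^ p) (hfb : fb ≤ b ^ p) :
      ((b - x) * fa + (x - a) * fb) / (b - a) ≤ x ^ p := by
    have hp0 : 0 ≤ p := logb_nonneg (by norm_num) (by norm_num)
    have hp1 : p ≤ 1 := (logb_le_iff_le_rpow (by norm_num) (by norm_num)).2 (by norm_num)
    have hconc : ConcaveOn ℝ (Ici 0) fun y : ℝ ↦ y ^ p := concaveOn_rpow hp0 hp1
    have h := hconc.sub_mul_add_sub_mul_le ha (ha.trans (hax.trans hxb)) hax hxb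
    rw [div_le_iff₀ (sub_pos.2 hab)]
    nlinarith
  have h2p : (3 / 2 : ℝ) ≤ 2 ^ p := two_rpow_logb_two_three_halves.ge
  have h3p : (1901 / 1000 : ℝ) ≤ 3 ^ p :=
    le_rpow_logb_two_three_halves (by norm_num) (by norm_num) (by norm_num)
  have h38p : (2183 / 1000 : ℝ) ≤ (19 / 5) ^ p :=
    le_rpow_logb_two_three_halves (by norm_num) (by norm_num) (by norm_num)
  have h4p : (9 / 4 : ℝ) ≤ 4 ^ p := by
    rw [show (4 : ℝ) = 2 * 2 by norm_num, mul_rpow (by norm_num) (by norm_num),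
      two_rpow_logb_two_three_halves]
    norm_num
  rcases le_or_gt x 3 with h3 | h3
  · refine ⟨_, ?_, chord (by norm_num) h2.le h3 (by norm_num) h2p h3p, ?_⟩ <;> norm_num
    · linarith
    · nlinarith [mul_pos (sub_pos.2 h2) (sub_pos.2 h2),
        mul_nonneg (sub_pos.2 h2).le (sub_nonneg.2 h3)]
  rcases le_or_gt x (19 / 5) with h38 | h38
  · refine ⟨_, ?_, chord (by norm_num) h3.le h38 (by norm_num) h3p h38p, ?_⟩ <;> norm_num
    · linarith
    · have ha := sub_nonneg.2 h3.le
      have hb := sub_nonneg.2 h38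
      nlinarith [mul_nonneg ha hb, mul_nonneg (mul_nonneg ha hb) ha,
        mul_nonneg (mul_nonneg ha hb) hb, mul_nonneg ha ha, mul_nonneg hb hb]
  · refine ⟨_, ?_, chord (by norm_num) h38.le h4.le (by norm_num) h38p h4p, ?_⟩ <;> norm_num
    · linarith
    · nlinarith [mul_pos (sub_pos.2 h4) (sub_pos.2 h4),
        mul_nonneg (sub_pos.2 h38).le (sub_pos.2 h4).le]

end Real

theorem rho_one {H : ℝ} (hH : 0 < H) : rho H 1 = (2 ^ (2 * H) - 2) / 2 := by
  norm_num [rho, zero_rpow (by positivity : 2 * H ≠ 0)]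

theorem rho_two (H : ℝ) : rho H 2 = (3 ^ (2 * H) - 2 * 2 ^ (2 * H) + 1) / 2 := by
  norm_num [rho]

theorem rho_three (H : ℝ) :
    rho H 3 = (2 ^ (2 * H) * 2 ^ (2 * H) - 2 * 3 ^ (2 * H) + 2 ^ (2 * H)) / 2 := by
  norm_num [rho, ← mul_rpow]

theorem one_sub_rho_two_pos {H : ℝ} (hH : H < 1) : 0 < 1 - rho H 2 := by
  rw [rho_two]
  linarith [three_rpow_lt_two_mul_two_rpow_add_one (t := 2 * H) (by linarith)]

theorem rho_two_add_sq_sub_pos {H : ℝ} (hH : H ∈ Ioo (1 / 2 : ℝ) 1) :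
    0 < rho H 2 + rho H 2 ^ 2 - rho H 1 ^ 2 - rho H 1 * rho H 3 := by
  obtain ⟨hH1, hH2⟩ := hH
  have hx2 : (2 : ℝ) < 2 ^ (2 * H) := by
    simpa using rpow_lt_rpow_of_exponent_lt (x := 2) (by norm_num) (by linarith : 1 < 2 * H)
  have hx4 : (2 : ℝ) ^ (2 * H) < 4 := by
    convert rpow_lt_rpow_of_exponent_lt (x := 2) (by norm_num) (by linarith : 2 * H < 2)
    norm_num
  have key := cubic_lt_sq_mul_rpow_logb_sub hx2 hx4
  rw [← three_rpow_eq_two_rpow_mul] at key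
  rw [rho_one (by linarith), rho_two, rho_three]
  linarith

theorem stmt_1 (H : ℝ) (hH : H ∈ Ioo (1 / 2 : ℝ) 1) :
    0 < (rho H 1) ^ 2 * rho H 2 - (rho H 2) ^ 3 + rho H 1 * rho H 2 * rho H 3
        - (rho H 1) ^ 2 + rho H 2 - rho H 1 * rho H 3 ∧
    (rho H 1) ^ 2 * rho H 2 - (rho H 2) ^ 3 + rho H 1 * rho H 2 * rho H 3
        - (rho H 1) ^ 2 + rho H 2 - rho H 1 * rho H 3
      = (1 - rho H 2) * (rho H 2 + (rho H 2) ^ 2 - (rho H 1) ^ 2 - rho H 1 * rho H 3) := by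
  have hfactor : (rho H 1) ^ 2 * rho H 2 - (rho H 2) ^ 3 + rho H 1 * rho H 2 * rho H 3
        - (rho H 1) ^ 2 + rho H 2 - rho H 1 * rho H 3
      = (1 - rho H 2) * (rho H 2 + (rho H 2) ^ 2 - (rho H 1) ^ 2 - rho H 1 * rho H 3) := by
    ring
  rw [hfactor]
  exact ⟨mul_pos (one_sub_rho_two_pos hH.2) (rho_two_add_sq_sub_pos hH), rfl⟩
end

section
/- For every H ∈ (1/2, 1), the denominator 1 + 2ρ_1²ρ_2 − ρ_2² − 2ρ_1² is strictly positive and the quotient Γ_4^3 = (ρ_1²ρ_2 − ρ_2³ + ρ_1ρ_2ρ_3 − ρ_1² + ρ_2 − ρ_1ρ_3)/(1 + 2ρ_1²ρ_2 − ρ_2² − 2ρ_1²) is strictly positive, where ρ_k = ρ_k(H). -/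
open Real Set Finset

/-! ### Auxiliary numeric lemmas -/

lemma log3_lb : (1.0983358 : ℝ) ≤ Real.log 3 := by
  have h5 : Real.log 243 = 5 * Real.log 3 := by
    rw [show (243:ℝ) = 3 ^ (5:ℕ) by norm_num, Real.log_pow]; push_cast; ring
  have h8 : Real.log 256 = 8 * Real.log 2 := by
    rw [show (256:ℝ) = 2 ^ (8:ℕ) by norm_num, Real.log_pow]; push_cast; ring
  have hd : Real.log ((256:ℝ)/243) = 8 * Real.log 2 - 5 * Real.log 3 := by
    rw [Real.log_div (by norm_num) (by norm_num), h5, h8]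
  have hub : Real.log ((256:ℝ)/243) ≤ 256/243 - 1 :=
    Real.log_le_sub_one_of_pos (by norm_num)
  have l2l := Real.log_two_gt_d9
  nlinarith [hd, hub, l2l]

lemma log3_ub : Real.log 3 ≤ (1.0988793 : ℝ) := by
  have h5 : Real.log 243 = 5 * Real.log 3 := by
    rw [show (243:ℝ) = 3 ^ (5:ℕ) by norm_num, Real.log_pow]; push_cast; ring
  have h8 : Real.log 256 = 8 * Real.log 2 := by
    rw [show (256:ℝ) = 2 ^ (8:ℕ) by norm_num, Real.log_pow]; push_cast; ring
  have hd : Real.log ((256:ℝ)/243) = 8 * Real.log 2 - 5 * Real.log 3 := by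
    rw [Real.log_div (by norm_num) (by norm_num), h5, h8]
  have hlb : Real.log ((243:ℝ)/256) ≤ 243/256 - 1 :=
    Real.log_le_sub_one_of_pos (by norm_num)
  have hinv : Real.log ((243:ℝ)/256) = - Real.log ((256:ℝ)/243) := by
    rw [← Real.log_inv]; norm_num
  rw [hinv] at hlb
  have l2u := Real.log_two_lt_d9
  nlinarith [hd, hlb, l2u]

lemma rpow_two' (x : ℝ) : x ^ (2:ℝ) = x * x := by
  rw [show (2:ℝ) = ((2:ℕ):ℝ) by norm_num, Real.rpow_natCast]; ring

/-! ### Monotonicity of `s ↦ 3^s - m·2^s` -/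

lemma hasDerivAt_G (m x : ℝ) :
    HasDerivAt (fun s : ℝ => (3:ℝ) ^ s - m * (2:ℝ) ^ s)
      ((3:ℝ) ^ x * Real.log 3 - m * ((2:ℝ) ^ x * Real.log 2)) x :=
  ((Real.hasStrictDerivAt_const_rpow (by norm_num : (0:ℝ) < 3) x).hasDerivAt).sub
    (((Real.hasStrictDerivAt_const_rpow (by norm_num : (0:ℝ) < 2) x).hasDerivAt).const_mul m)

lemma G_strictMonoOn (m lb s0 : ℝ)
    (hcond : m * Real.log 2 < lb * Real.log 3)
    (hlb : lb ≤ ((3:ℝ)/2) ^ s0) :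
    StrictMonoOn (fun s : ℝ => (3:ℝ) ^ s - m * (2:ℝ) ^ s) (Set.Ici s0) := by
  apply strictMonoOn_of_deriv_pos (convex_Ici s0)
  · exact fun x _ => ((hasDerivAt_G m x).continuousAt).continuousWithinAt
  · intro x hx
    rw [interior_Ici] at hx
    rw [(hasDerivAt_G m x).deriv]
    have h2 : (0:ℝ) < (2:ℝ) ^ x := Real.rpow_pos_of_pos (by norm_num) x
    have h3 : (3:ℝ) ^ x = ((3:ℝ)/2) ^ x * (2:ℝ) ^ x := by
      rw [← Real.mul_rpow (by norm_num) (by norm_num)]; norm_num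
    have hmono : ((3:ℝ)/2) ^ s0 ≤ ((3:ℝ)/2) ^ x :=
      (Real.rpow_le_rpow_left_iff (by norm_num : (1:ℝ) < 3/2)).2 (le_of_lt hx)
    have hlog3 : (0:ℝ) < Real.log 3 := Real.log_pos (by norm_num)
    have hk : m * Real.log 2 < ((3:ℝ)/2) ^ x * Real.log 3 :=
      lt_of_lt_of_le hcond (mul_le_mul_of_nonneg_right (hlb.trans hmono) hlog3.le)
    rw [h3]
    nlinarith [mul_pos h2 (sub_pos.2 hk)]

lemma G_strictAntiOn (m ub s1 : ℝ)
    (hcond : ub * Real.log 3 < m * Real.log 2)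
    (hub : ((3:ℝ)/2) ^ s1 ≤ ub) :
    StrictAntiOn (fun s : ℝ => (3:ℝ) ^ s - m * (2:ℝ) ^ s) (Set.Iic s1) := by
  apply strictAntiOn_of_deriv_neg (convex_Iic s1)
  · exact fun x _ => ((hasDerivAt_G m x).continuousAt).continuousWithinAt
  · intro x hx
    rw [interior_Iic] at hx
    rw [(hasDerivAt_G m x).deriv]
    have h2 : (0:ℝ) < (2:ℝ) ^ x := Real.rpow_pos_of_pos (by norm_num) x
    have h3 : (3:ℝ) ^ x = ((3:ℝ)/2) ^ x * (2:ℝ) ^ x := by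
      rw [← Real.mul_rpow (by norm_num) (by norm_num)]; norm_num
    have hmono : ((3:ℝ)/2) ^ x ≤ ((3:ℝ)/2) ^ s1 :=
      (Real.rpow_le_rpow_left_iff (by norm_num : (1:ℝ) < 3/2)).2 (le_of_lt hx)
    have hlog3 : (0:ℝ) < Real.log 3 := Real.log_pos (by norm_num)
    have hk : ((3:ℝ)/2) ^ x * Real.log 3 < m * Real.log 2 :=
      lt_of_le_of_lt (mul_le_mul_of_nonneg_right (hmono.trans hub) hlog3.le) hcond
    rw [h3]
    nlinarith [mul_pos h2 (sub_pos.2 hk)]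

lemma line_inc {m A2u B3l L15l g s : ℝ} (hm : 0 ≤ m)
    (h2g : (2:ℝ) ^ g ≤ A2u) (h3g : B3l ≤ (3:ℝ) ^ g) (h15 : L15l ≤ ((3:ℝ)/2) ^ g)
    (hcond : m * Real.log 2 < L15l * Real.log 3)
    (hs : g ≤ s) : m * (2:ℝ) ^ s + (B3l - m * A2u) ≤ (3:ℝ) ^ s := by
  have h := (G_strictMonoOn m L15l g hcond h15).monotoneOn
    (Set.self_mem_Ici) (Set.mem_Ici.2 hs) hs
  nlinarith [mul_le_mul_of_nonneg_left h2g hm]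

lemma line_dec {m A2u B3l L15u g s : ℝ} (hm : 0 ≤ m)
    (h2g : (2:ℝ) ^ g ≤ A2u) (h3g : B3l ≤ (3:ℝ) ^ g) (h15 : ((3:ℝ)/2) ^ g ≤ L15u)
    (hcond : L15u * Real.log 3 < m * Real.log 2)
    (hs : s ≤ g) : m * (2:ℝ) ^ s + (B3l - m * A2u) ≤ (3:ℝ) ^ s := by
  have h := (G_strictAntiOn m L15u g hcond h15).antitoneOn
    (Set.mem_Iic.2 hs) (Set.self_mem_Iic) hs
  nlinarith [mul_le_mul_of_nonneg_left h2g hm]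

/-! ### Rational bounds on rpow at rational exponents -/

lemma rpow_div_le {x r : ℝ} (hx : 0 < x) (hr : 0 < r) (p q : ℕ) (hq : q ≠ 0)
    (h : x ^ p ≤ r ^ q) : x ^ ((p : ℝ) / (q : ℝ)) ≤ r := by
  have hq' : ((q:ℕ):ℝ) ≠ 0 := Nat.cast_ne_zero.2 hq
  have key : (x ^ ((p:ℝ)/(q:ℝ))) ^ (q:ℕ) = x ^ p := by
    rw [← Real.rpow_natCast (x ^ ((p:ℝ)/(q:ℝ))) q, ← Real.rpow_mul hx.le,
        div_mul_cancel₀ _ hq', Real.rpow_natCast]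
  have h1 : (x ^ ((p:ℝ)/(q:ℝ))) ^ (q:ℕ) ≤ r ^ (q:ℕ) := by rw [key]; exact h
  exact le_of_pow_le_pow_left₀ hq hr.le h1

lemma le_rpow_div {x r : ℝ} (hx : 0 < x) (hr : 0 ≤ r) (p q : ℕ) (hq : q ≠ 0)
    (h : r ^ q ≤ x ^ p) : r ≤ x ^ ((p : ℝ) / (q : ℝ)) := by
  have hq' : ((q:ℕ):ℝ) ≠ 0 := Nat.cast_ne_zero.2 hq
  have key : (x ^ ((p:ℝ)/(q:ℝ))) ^ (q:ℕ) = x ^ p := by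
    rw [← Real.rpow_natCast (x ^ ((p:ℝ)/(q:ℝ))) q, ← Real.rpow_mul hx.le,
        div_mul_cancel₀ _ hq', Real.rpow_natCast]
  have h1 : r ^ (q:ℕ) ≤ (x ^ ((p:ℝ)/(q:ℝ))) ^ (q:ℕ) := by rw [key]; exact h
  exact le_of_pow_le_pow_left₀ hq (Real.rpow_pos_of_pos hx _).le h1

lemma b2l_5_4 : ((237841:ℝ)/100000) ≤ (2:ℝ) ^ ((5:ℝ)/4) := le_rpow_div (by norm_num) (by norm_num) 5 4 (by norm_num) (by norm_num)

lemma b2u_5_4 : (2:ℝ) ^ ((5:ℝ)/4) ≤ ((118921:ℝ)/50000) := rpow_div_le (by norm_num) (by norm_num) 5 4 (by norm_num) (by norm_num)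

lemma b3l_5_4 : ((197411:ℝ)/50000) ≤ (3:ℝ) ^ ((5:ℝ)/4) := le_rpow_div (by norm_num) (by norm_num) 5 4 (by norm_num) (by norm_num)

lemma b15l_5_4 : ((83001:ℝ)/50000) ≤ ((3:ℝ)/2) ^ ((5:ℝ)/4) := le_rpow_div (by norm_num) (by norm_num) 5 4 (by norm_num) (by norm_num)

lemma b15u_5_4 : ((3:ℝ)/2) ^ ((5:ℝ)/4) ≤ ((166003:ℝ)/100000) := rpow_div_le (by norm_num) (by norm_num) 5 4 (by norm_num) (by norm_num)

lemma b2l_3_2 : ((141421:ℝ)/50000) ≤ (2:ℝ) ^ ((3:ℝ)/2) := le_rpow_div (by norm_num) (by norm_num) 3 2 (by norm_num) (by norm_num)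

lemma b2u_3_2 : (2:ℝ) ^ ((3:ℝ)/2) ≤ ((282843:ℝ)/100000) := rpow_div_le (by norm_num) (by norm_num) 3 2 (by norm_num) (by norm_num)

lemma b3l_3_2 : ((103923:ℝ)/20000) ≤ (3:ℝ) ^ ((3:ℝ)/2) := le_rpow_div (by norm_num) (by norm_num) 3 2 (by norm_num) (by norm_num)

lemma b15l_3_2 : ((183711:ℝ)/100000) ≤ ((3:ℝ)/2) ^ ((3:ℝ)/2) := le_rpow_div (by norm_num) (by norm_num) 3 2 (by norm_num) (by norm_num)

lemma b15u_3_2 : ((3:ℝ)/2) ^ ((3:ℝ)/2) ≤ ((5741:ℝ)/3125) := rpow_div_le (by norm_num) (by norm_num) 3 2 (by norm_num) (by norm_num)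

lemma b2l_7_4 : ((168179:ℝ)/50000) ≤ (2:ℝ) ^ ((7:ℝ)/4) := le_rpow_div (by norm_num) (by norm_num) 7 4 (by norm_num) (by norm_num)

lemma b2u_7_4 : (2:ℝ) ^ ((7:ℝ)/4) ≤ ((336359:ℝ)/100000) := rpow_div_le (by norm_num) (by norm_num) 7 4 (by norm_num) (by norm_num)

lemma b3l_7_4 : ((170963:ℝ)/25000) ≤ (3:ℝ) ^ ((7:ℝ)/4) := le_rpow_div (by norm_num) (by norm_num) 7 4 (by norm_num) (by norm_num)

lemma b15l_7_4 : ((20331:ℝ)/10000) ≤ ((3:ℝ)/2) ^ ((7:ℝ)/4) := le_rpow_div (by norm_num) (by norm_num) 7 4 (by norm_num) (by norm_num)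

lemma b15u_7_4 : ((3:ℝ)/2) ^ ((7:ℝ)/4) ≤ ((203311:ℝ)/100000) := rpow_div_le (by norm_num) (by norm_num) 7 4 (by norm_num) (by norm_num)

lemma b2l_15_8 : ((366801:ℝ)/100000) ≤ (2:ℝ) ^ ((15:ℝ)/8) := le_rpow_div (by norm_num) (by norm_num) 15 8 (by norm_num) (by norm_num)

lemma b2u_15_8 : (2:ℝ) ^ ((15:ℝ)/8) ≤ ((183401:ℝ)/50000) := rpow_div_le (by norm_num) (by norm_num) 15 8 (by norm_num) (by norm_num)

lemma b3l_15_8 : ((196129:ℝ)/25000) ≤ (3:ℝ) ^ ((15:ℝ)/8) := le_rpow_div (by norm_num) (by norm_num) 15 8 (by norm_num) (by norm_num)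

lemma b15l_15_8 : ((5347:ℝ)/2500) ≤ ((3:ℝ)/2) ^ ((15:ℝ)/8) := le_rpow_div (by norm_num) (by norm_num) 15 8 (by norm_num) (by norm_num)

lemma b15u_15_8 : ((3:ℝ)/2) ^ ((15:ℝ)/8) ≤ ((213881:ℝ)/100000) := rpow_div_le (by norm_num) (by norm_num) 15 8 (by norm_num) (by norm_num)

lemma b2l_31_16 : ((383041:ℝ)/100000) ≤ (2:ℝ) ^ ((31:ℝ)/16) := le_rpow_div (by norm_num) (by norm_num) 31 16 (by norm_num) (by norm_num)

lemma b2u_31_16 : (2:ℝ) ^ ((31:ℝ)/16) ≤ ((191521:ℝ)/50000) := rpow_div_le (by norm_num) (by norm_num) 31 16 (by norm_num) (by norm_num)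

lemma b3l_31_16 : ((210069:ℝ)/25000) ≤ (3:ℝ) ^ ((31:ℝ)/16) := le_rpow_div (by norm_num) (by norm_num) 31 16 (by norm_num) (by norm_num)

lemma b15l_31_16 : ((219369:ℝ)/100000) ≤ ((3:ℝ)/2) ^ ((31:ℝ)/16) := le_rpow_div (by norm_num) (by norm_num) 31 16 (by norm_num) (by norm_num)

lemma b15u_31_16 : ((3:ℝ)/2) ^ ((31:ℝ)/16) ≤ ((21937:ℝ)/10000) := rpow_div_le (by norm_num) (by norm_num) 31 16 (by norm_num) (by norm_num)

/-! ### The eleven secant/tangent line bounds -/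

lemma lineI_1 {s : ℝ} (hs : (1:ℝ) ≤ s) :
    (59421/25000:ℝ) * (2:ℝ)^s + (3 - (59421/25000) * 2) ≤ (3:ℝ)^s :=
  line_inc (by norm_num) (Real.rpow_one 2).le (Real.rpow_one 3).ge
    (Real.rpow_one ((3:ℝ)/2)).ge
    (by nlinarith [Real.log_two_lt_d9, log3_lb]) hs

lemma lineD_5_4 {s : ℝ} (hs : s ≤ (5:ℝ)/4) :
    (263173/100000:ℝ) * (2:ℝ)^s + ((197411:ℝ)/50000 - (263173/100000) * ((118921:ℝ)/50000)) ≤ (3:ℝ)^s :=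
  line_dec (by norm_num) b2u_5_4 b3l_5_4 b15u_5_4
    (by nlinarith [Real.log_two_gt_d9, log3_ub]) hs

lemma lineI_5_4 {s : ℝ} (hs : (5:ℝ)/4 ≤ s) :
    (1644/625:ℝ) * (2:ℝ)^s + ((197411:ℝ)/50000 - (1644/625) * ((118921:ℝ)/50000)) ≤ (3:ℝ)^s :=
  line_inc (by norm_num) b2u_5_4 b3l_5_4 b15l_5_4
    (by nlinarith [Real.log_two_lt_d9, log3_lb]) hs

lemma lineD_3_2 {s : ℝ} (hs : s ≤ (3:ℝ)/2) :
    (18203/6250:ℝ) * (2:ℝ)^s + ((103923:ℝ)/20000 - (18203/6250) * ((282843:ℝ)/100000)) ≤ (3:ℝ)^s :=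
  line_dec (by norm_num) b2u_3_2 b3l_3_2 b15u_3_2
    (by nlinarith [Real.log_two_gt_d9, log3_ub]) hs

lemma lineI_3_2 {s : ℝ} (hs : (3:ℝ)/2 ≤ s) :
    (291101/100000:ℝ) * (2:ℝ)^s + ((103923:ℝ)/20000 - (291101/100000) * ((282843:ℝ)/100000)) ≤ (3:ℝ)^s :=
  line_inc (by norm_num) b2u_3_2 b3l_3_2 b15l_3_2
    (by nlinarith [Real.log_two_lt_d9, log3_lb]) hs

lemma lineD_7_4 {s : ℝ} (hs : s ≤ (7:ℝ)/4) :
    (322319/100000:ℝ) * (2:ℝ)^s + ((170963:ℝ)/25000 - (322319/100000) * ((336359:ℝ)/100000)) ≤ (3:ℝ)^s :=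
  line_dec (by norm_num) b2u_7_4 b3l_7_4 b15u_7_4
    (by nlinarith [Real.log_two_gt_d9, log3_ub]) hs

lemma lineI_7_4 {s : ℝ} (hs : (7:ℝ)/4 ≤ s) :
    (322157/100000:ℝ) * (2:ℝ)^s + ((170963:ℝ)/25000 - (322157/100000) * ((336359:ℝ)/100000)) ≤ (3:ℝ)^s :=
  line_inc (by norm_num) b2u_7_4 b3l_7_4 b15l_7_4
    (by nlinarith [Real.log_two_lt_d9, log3_lb]) hs

lemma lineD_15_8 {s : ℝ} (hs : s ≤ (15:ℝ)/8) :
    (84769/25000:ℝ) * (2:ℝ)^s + ((196129:ℝ)/25000 - (84769/25000) * ((183401:ℝ)/50000)) ≤ (3:ℝ)^s :=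
  line_dec (by norm_num) b2u_15_8 b3l_15_8 b15u_15_8
    (by nlinarith [Real.log_two_gt_d9, log3_ub]) hs

lemma lineI_15_8 {s : ℝ} (hs : (15:ℝ)/8 ≤ s) :
    (169453/50000:ℝ) * (2:ℝ)^s + ((196129:ℝ)/25000 - (169453/50000) * ((183401:ℝ)/50000)) ≤ (3:ℝ)^s :=
  line_inc (by norm_num) b2u_15_8 b3l_15_8 b15l_15_8
    (by nlinarith [Real.log_two_lt_d9, log3_lb]) hs

lemma lineD_31_16 {s : ℝ} (hs : s ≤ (31:ℝ)/16) :
    (173889/50000:ℝ) * (2:ℝ)^s + ((210069:ℝ)/25000 - (173889/50000) * ((191521:ℝ)/50000)) ≤ (3:ℝ)^s :=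
  line_dec (by norm_num) b2u_31_16 b3l_31_16 b15u_31_16
    (by nlinarith [Real.log_two_gt_d9, log3_ub]) hs

lemma lineI_31_16 {s : ℝ} (hs : (31:ℝ)/16 ≤ s) :
    (86901/25000:ℝ) * (2:ℝ)^s + ((210069:ℝ)/25000 - (86901/25000) * ((191521:ℝ)/50000)) ≤ (3:ℝ)^s :=
  line_inc (by norm_num) b2u_31_16 b3l_31_16 b15l_31_16
    (by nlinarith [Real.log_two_lt_d9, log3_lb]) hs

lemma lineD_2 {s : ℝ} (hs : s ≤ (2:ℝ)) :
    (11147/3125:ℝ) * (2:ℝ)^s + (9 - (11147/3125) * 4) ≤ (3:ℝ)^s :=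
  line_dec (by norm_num) (by rw [rpow_two']; try norm_num) (by rw [rpow_two']; try norm_num)
    (by rw [rpow_two']; try norm_num)
    (by nlinarith [Real.log_two_gt_d9, log3_ub]) hs

/-! ### Positivity of the key cubic expression -/

set_option maxHeartbeats 1600000 in
lemma P_pos {s : ℝ} (hs1 : 1 < s) (hs2 : s < 2) :
    0 < (3:ℝ)^s * (3:ℝ)^s - 2 * ((2:ℝ)^s) * ((3:ℝ)^s) + 4 * ((2:ℝ)^s) * ((2:ℝ)^s)
        - ((2:ℝ)^s) * ((2:ℝ)^s) * ((2:ℝ)^s) - 2 * ((2:ℝ)^s) - 1 := by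
  set a := (2:ℝ)^s with ha
  set b := (3:ℝ)^s with hb
  have hba : a < b := Real.rpow_lt_rpow (by norm_num) (by norm_num) (by linarith)
  have ha2 : 2 < a := by
    have := (Real.rpow_lt_rpow_left_iff (by norm_num : (1:ℝ) < 2)).2 hs1
    rwa [Real.rpow_one] at this
  have ha4 : a < 4 := by
    have := (Real.rpow_lt_rpow_left_iff (by norm_num : (1:ℝ) < 2)).2 hs2
    rwa [rpow_two', show (2:ℝ)*2 = 4 by norm_num] at this
  have hmono2 : ∀ {u v : ℝ}, u ≤ v → (2:ℝ)^u ≤ (2:ℝ)^v :=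
    fun h => (Real.rpow_le_rpow_left_iff (by norm_num : (1:ℝ) < 2)).2 h
  rcases le_or_gt s ((5:ℝ)/4) with hc | hc
  · -- s ∈ (1, 5/4]
    have hahi : a ≤ 118921/50000 := (hmono2 hc).trans b2u_5_4
    have hL1 := lineI_1 hs1.le
    have hL2 := lineD_5_4 hc
    rw [← ha, ← hb] at hL1 hL2
    rcases le_total ((59421/25000:ℝ) * a + (3 - (59421/25000) * 2))
        ((263173/100000:ℝ) * a + ((197411:ℝ)/50000 - (263173/100000) * ((118921:ℝ)/50000))) with hx | hx
    · nlinarith [mul_nonneg (sub_nonneg.2 hL2) (by linarith : (0:ℝ) ≤ b + ((263173/100000:ℝ) * a + ((197411:ℝ)/50000 - (263173/100000) * ((118921:ℝ)/50000))) - 2*a),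
        mul_pos (sub_pos.2 ha2) (sub_pos.2 ha2), mul_nonneg (sub_pos.2 ha2).le (sub_nonneg.2 hahi)]
    · nlinarith [mul_nonneg (sub_nonneg.2 hL1) (by linarith : (0:ℝ) ≤ b + ((59421/25000:ℝ) * a + (3 - (59421/25000) * 2)) - 2*a),
        mul_pos (sub_pos.2 ha2) (sub_pos.2 ha2), mul_nonneg (sub_pos.2 ha2).le (sub_nonneg.2 hahi)]
  · rcases le_or_gt s ((3:ℝ)/2) with hc2 | hc2
    · -- s ∈ (5/4, 3/2]
      have halo : (237841:ℝ)/100000 ≤ a := b2l_5_4.trans (hmono2 hc.le)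
      have hahi : a ≤ 282843/100000 := (hmono2 hc2).trans b2u_3_2
      have hL1 := lineI_5_4 hc.le
      have hL2 := lineD_3_2 hc2
      rw [← ha, ← hb] at hL1 hL2
      rcases le_total ((1644/625:ℝ) * a + ((197411:ℝ)/50000 - (1644/625) * ((118921:ℝ)/50000)))
          ((18203/6250:ℝ) * a + ((103923:ℝ)/20000 - (18203/6250) * ((282843:ℝ)/100000))) with hx | hx
      · nlinarith [mul_nonneg (sub_nonneg.2 hL2) (by linarith : (0:ℝ) ≤ b + ((18203/6250:ℝ) * a + ((103923:ℝ)/20000 - (18203/6250) * ((282843:ℝ)/100000))) - 2*a),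
          mul_nonneg (sub_nonneg.2 halo) (sub_nonneg.2 hahi)]
      · nlinarith [mul_nonneg (sub_nonneg.2 hL1) (by linarith : (0:ℝ) ≤ b + ((1644/625:ℝ) * a + ((197411:ℝ)/50000 - (1644/625) * ((118921:ℝ)/50000))) - 2*a),
          mul_nonneg (sub_nonneg.2 halo) (sub_nonneg.2 hahi)]
    · rcases le_or_gt s ((7:ℝ)/4) with hc3 | hc3
      · -- s ∈ (3/2, 7/4]
        have halo : (141421:ℝ)/50000 ≤ a := b2l_3_2.trans (hmono2 hc2.le)
        have hahi : a ≤ 336359/100000 := (hmono2 hc3).trans b2u_7_4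
        have hL1 := lineI_3_2 hc2.le
        have hL2 := lineD_7_4 hc3
        rw [← ha, ← hb] at hL1 hL2
        rcases le_total ((291101/100000:ℝ) * a + ((103923:ℝ)/20000 - (291101/100000) * ((282843:ℝ)/100000)))
            ((322319/100000:ℝ) * a + ((170963:ℝ)/25000 - (322319/100000) * ((336359:ℝ)/100000))) with hx | hx
        · nlinarith [mul_nonneg (sub_nonneg.2 hL2) (by linarith : (0:ℝ) ≤ b + ((322319/100000:ℝ) * a + ((170963:ℝ)/25000 - (322319/100000) * ((336359:ℝ)/100000))) - 2*a),
            mul_nonneg (sub_nonneg.2 halo) (sub_nonneg.2 hahi)]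
        · nlinarith [mul_nonneg (sub_nonneg.2 hL1) (by linarith : (0:ℝ) ≤ b + ((291101/100000:ℝ) * a + ((103923:ℝ)/20000 - (291101/100000) * ((282843:ℝ)/100000))) - 2*a),
            mul_nonneg (sub_nonneg.2 halo) (sub_nonneg.2 hahi)]
      · rcases le_or_gt s ((15:ℝ)/8) with hc4 | hc4
        · -- s ∈ (7/4, 15/8]
          have halo : (168179:ℝ)/50000 ≤ a := b2l_7_4.trans (hmono2 hc3.le)
          have hahi : a ≤ 183401/50000 := (hmono2 hc4).trans b2u_15_8
          have hL1 := lineI_7_4 hc3.le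
          have hL2 := lineD_15_8 hc4
          rw [← ha, ← hb] at hL1 hL2
          rcases le_total ((322157/100000:ℝ) * a + ((170963:ℝ)/25000 - (322157/100000) * ((336359:ℝ)/100000)))
              ((84769/25000:ℝ) * a + ((196129:ℝ)/25000 - (84769/25000) * ((183401:ℝ)/50000))) with hx | hx
          · nlinarith [mul_nonneg (sub_nonneg.2 hL2) (by linarith : (0:ℝ) ≤ b + ((84769/25000:ℝ) * a + ((196129:ℝ)/25000 - (84769/25000) * ((183401:ℝ)/50000))) - 2*a),
              mul_nonneg (sub_nonneg.2 halo) (sub_nonneg.2 hahi)]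
          · nlinarith [mul_nonneg (sub_nonneg.2 hL1) (by linarith : (0:ℝ) ≤ b + ((322157/100000:ℝ) * a + ((170963:ℝ)/25000 - (322157/100000) * ((336359:ℝ)/100000))) - 2*a),
              mul_nonneg (sub_nonneg.2 halo) (sub_nonneg.2 hahi)]
        · rcases le_or_gt s ((31:ℝ)/16) with hc5 | hc5
          · -- s ∈ (15/8, 31/16]
            have halo : (366801:ℝ)/100000 ≤ a := b2l_15_8.trans (hmono2 hc4.le)
            have hahi : a ≤ 191521/50000 := (hmono2 hc5).trans b2u_31_16
            have hL1 := lineI_15_8 hc4.le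
            have hL2 := lineD_31_16 hc5
            rw [← ha, ← hb] at hL1 hL2
            rcases le_total ((169453/50000:ℝ) * a + ((196129:ℝ)/25000 - (169453/50000) * ((183401:ℝ)/50000)))
                ((173889/50000:ℝ) * a + ((210069:ℝ)/25000 - (173889/50000) * ((191521:ℝ)/50000))) with hx | hx
            · nlinarith [mul_nonneg (sub_nonneg.2 hL2) (by linarith : (0:ℝ) ≤ b + ((173889/50000:ℝ) * a + ((210069:ℝ)/25000 - (173889/50000) * ((191521:ℝ)/50000))) - 2*a),
                mul_nonneg (sub_nonneg.2 halo) (sub_nonneg.2 hahi)]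
            · nlinarith [mul_nonneg (sub_nonneg.2 hL1) (by linarith : (0:ℝ) ≤ b + ((169453/50000:ℝ) * a + ((196129:ℝ)/25000 - (169453/50000) * ((183401:ℝ)/50000))) - 2*a),
                mul_nonneg (sub_nonneg.2 halo) (sub_nonneg.2 hahi)]
          · -- s ∈ (31/16, 2)
            have halo : (383041:ℝ)/100000 ≤ a := b2l_31_16.trans (hmono2 hc5.le)
            have hL1 := lineI_31_16 hc5.le
            have hL2 := lineD_2 hs2.le
            rw [← ha, ← hb] at hL1 hL2
            rcases le_total ((86901/25000:ℝ) * a + ((210069:ℝ)/25000 - (86901/25000) * ((191521:ℝ)/50000)))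
                ((11147/3125:ℝ) * a + (9 - (11147/3125) * 4)) with hx | hx
            · nlinarith [mul_nonneg (sub_nonneg.2 hL2) (by linarith : (0:ℝ) ≤ b + ((11147/3125:ℝ) * a + (9 - (11147/3125) * 4)) - 2*a),
                mul_pos (sub_pos.2 ha4) (sub_pos.2 ha4), mul_nonneg (sub_nonneg.2 halo) (sub_pos.2 ha4).le]
            · nlinarith [mul_nonneg (sub_nonneg.2 hL1) (by linarith : (0:ℝ) ≤ b + ((86901/25000:ℝ) * a + ((210069:ℝ)/25000 - (86901/25000) * ((191521:ℝ)/50000))) - 2*a),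
                mul_pos (sub_pos.2 ha4) (sub_pos.2 ha4), mul_nonneg (sub_nonneg.2 halo) (sub_pos.2 ha4).le]

theorem stmt_2 (H : ℝ) (hH : H ∈ Ioo (1 / 2 : ℝ) 1) :
    0 < 1 + 2 * (rho H 1) ^ 2 * rho H 2 - (rho H 2) ^ 2 - 2 * (rho H 1) ^ 2 ∧
    0 < ((rho H 1) ^ 2 * rho H 2 - (rho H 2) ^ 3 + rho H 1 * rho H 2 * rho H 3
          - (rho H 1) ^ 2 + rho H 2 - rho H 1 * rho H 3)
        / (1 + 2 * (rho H 1) ^ 2 * rho H 2 - (rho H 2) ^ 2 - 2 * (rho H 1) ^ 2) := by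
  obtain ⟨hH1, hH2⟩ := hH
  set s : ℝ := 2 * H with hsdef
  have hs1 : 1 < s := by simp only [hsdef]; linarith
  have hs2 : s < 2 := by simp only [hsdef]; linarith
  have hsne : s ≠ 0 := by positivity
  set a : ℝ := (2:ℝ)^s with ha
  set b : ℝ := (3:ℝ)^s with hb
  have hba : a < b := Real.rpow_lt_rpow (by norm_num) (by norm_num) (by linarith)
  have ha2 : 2 < a := by
    have := (Real.rpow_lt_rpow_left_iff (by norm_num : (1:ℝ) < 2)).2 hs1
    rwa [Real.rpow_one] at this
  have ha4 : a < 4 := by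
    have := (Real.rpow_lt_rpow_left_iff (by norm_num : (1:ℝ) < 2)).2 hs2
    rwa [rpow_two', show (2:ℝ)*2 = 4 by norm_num] at this
  -- rho values
  have e1 : rho H 1 = (a - 2) / 2 := by
    rw [rho]
    norm_num [← hsdef, Real.one_rpow, Real.zero_rpow hsne, ← ha]
  have e2 : rho H 2 = (b - 2*a + 1) / 2 := by
    rw [rho]
    norm_num [← hsdef, Real.one_rpow, ← ha, ← hb]
    try ring
  have e3 : rho H 3 = (a*a - 2*b + a) / 2 := by
    rw [rho]
    have h4 : ((4:ℝ))^s = a * a := by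
      rw [show (4:ℝ) = 2*2 by norm_num, Real.mul_rpow (by norm_num) (by norm_num), ha]
    norm_num [← hsdef, ← ha, ← hb, h4]
    try ring
  -- b < 2a + 1
  have hK : b < 2*a + 1 := by
    have hmono := G_strictMonoOn 2 ((3:ℝ)/2) 1
      (by nlinarith [Real.log_two_lt_d9, log3_lb]) (Real.rpow_one ((3:ℝ)/2)).ge
    have h := hmono (Set.mem_Ici.2 hs1.le) (Set.mem_Ici.2 (by norm_num : (1:ℝ) ≤ 2)) hs2
    simp only at h
    rw [rpow_two', rpow_two'] at h
    rw [← ha, ← hb] at h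
    nlinarith [h]
  -- b + 2a - a² - 1 > 0
  have hA : 0 < b + 2*a - a*a - 1 := by
    have hL := lineD_2 hs2.le
    rw [← ha, ← hb] at hL
    nlinarith [mul_pos (sub_pos.2 ha4) (sub_pos.2 ha2)]
  have hP := P_pos hs1 hs2
  rw [← ha, ← hb] at hP
  have hD : 0 < 1 + 2 * (rho H 1) ^ 2 * rho H 2 - (rho H 2) ^ 2 - 2 * (rho H 1) ^ 2 := by
    rw [e1, e2]
    have key : 1 + 2 * (((a-2)/2)) ^ 2 * ((b - 2*a + 1)/2) - ((b - 2*a + 1)/2) ^ 2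
        - 2 * (((a-2)/2)) ^ 2
        = (2*a + 1 - b) * (b + 2*a - a*a - 1) / 4 := by ring
    rw [key]
    exact div_pos (mul_pos (by linarith) hA) (by norm_num)
  have hN : 0 < (rho H 1) ^ 2 * rho H 2 - (rho H 2) ^ 3 + rho H 1 * rho H 2 * rho H 3
      - (rho H 1) ^ 2 + rho H 2 - rho H 1 * rho H 3 := by
    rw [e1, e2, e3]
    have key : ((a-2)/2) ^ 2 * ((b-2*a+1)/2) - ((b-2*a+1)/2) ^ 3
        + ((a-2)/2) * ((b-2*a+1)/2) * ((a*a-2*b+a)/2)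
        - ((a-2)/2) ^ 2 + ((b-2*a+1)/2) - ((a-2)/2) * ((a*a-2*b+a)/2)
        = (2*a + 1 - b) * (b*b - 2*a*b + 4*a*a - a*a*a - 2*a - 1) / 8 := by ring
    rw [key]
    exact div_pos (mul_pos (by linarith) (by linarith [hP])) (by norm_num)
  exact ⟨hD, div_pos hN hD⟩
end

section
/- Let H ∈ (1/2, 1), let n ≥ 2, and let (Γ_n^k)_{k=2,…,n} be real numbers satisfying the one-sided projection system ρ_{l−1} = Σ_{k=2}^n Γ_n^k · ρ_{|l−k|} for all 2 ≤ l ≤ n, where ρ_k = ρ_k(H). If Γ_n^k > 0 for all 2 ≤ k ≤ n, then ρ_n − Σ_{k=2}^n Γ_n^k · ρ_{n+1−k} > 0; consequently, the coefficient Γ_{n+1}^{n+1} = (ρ_n − Σ_{k=2}^n Γ_n^k ρ_{n+1−k})/(1 − Σ_{k=2}^n Γ_n^k ρ_{k−1}) is strictly positive whenever its denominator is strictly positive. -/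
open Real Set Finset

/-!
For `1/2 < H < 1` one has `ρ_{k+1} = H(2H-1) ∫₀¹∫₀¹ (k+u+v)^{2H-2} du dv`. The integrand
`φ(y) = y^{2H-2}` satisfies `φ(y+1)² ≤ φ(y) φ(y+2)`, and by Cauchy–Schwarz each average over a unit
window preserves this, so `ρ` is log-convex from `k = 1` on. Together with `ρ₁² < ρ₂` (equivalently
`16^H + 2 < 2·9^H`, a strict convexity statement for `s ↦ b^s`), the ratios `ρ_{j+1}/ρ_j` increase
in `j ≥ 0`, strictly from `j = 0` to `j = 1`. Put `R = ρ_n/ρ_{n-1}`. Then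
`Γ_k ρ_{n+1-k} ≤ Γ_k ρ_{n-k} R`, strictly for `k = n`, and summing against the `l = n` equation
`ρ_{n-1} = Σ Γ_k ρ_{n-k}` of the system gives `Σ Γ_k ρ_{n+1-k} < ρ_{n-1} R = ρ_n`.
-/

open MeasureTheory

theorem sq_integral_le_integral_mul_integral_of_sq_le_mul {α : Type*} [MeasurableSpace α]
    {μ : Measure α} {f g h : α → ℝ}
    (hf : Integrable f μ) (hg : Integrable g μ) (hh : Integrable h μ)
    (hf₀ : 0 ≤ᵐ[μ] f) (hh₀ : 0 ≤ᵐ[μ] h) (hgfh : ∀ᵐ x ∂μ, g x ^ 2 ≤ f x * h x) :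
    (∫ x, g x ∂μ) ^ 2 ≤ (∫ x, f x ∂μ) * ∫ x, h x ∂μ := by
  have hquad (t : ℝ) :
      0 ≤ (∫ x, f x ∂μ) * (t * t) + (-2 * ∫ x, g x ∂μ) * t + ∫ x, h x ∂μ := by
    have hint : ∫ x, (f x * (t * t) + -2 * g x * t + h x) ∂μ
        = (∫ x, f x ∂μ) * (t * t) + (-2 * ∫ x, g x ∂μ) * t + ∫ x, h x ∂μ := by
      rw [integral_add (by fun_prop) hh, integral_add (by fun_prop) (by fun_prop),
        integral_mul_const, integral_mul_const, integral_const_mul]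
    rw [← hint]
    refine integral_nonneg_of_ae ?_
    filter_upwards [hf₀, hh₀, hgfh] with x (hfx : 0 ≤ f x) (hhx : 0 ≤ h x) hgx
    rw [Pi.zero_apply]
    rcases hfx.eq_or_lt with hf0 | hfpos
    · have hg0 : g x = 0 := by nlinarith [sq_nonneg (g x)]
      simp [← hf0, hg0, hhx]
    · refine nonneg_of_mul_nonneg_right ?_ hfpos
      nlinarith [sq_nonneg (f x * t - g x)]
  have := discrim_le_zero hquad
  rw [discrim] at this
  nlinarith

theorem rpow_lt_of_mem_Ioo_one_two {b s : ℝ} (hb : 0 < b) (hb₁ : b ≠ 1) (hs : s ∈ Set.Ioo 1 2) :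
    b ^ s < (2 - s) * b + (s - 1) * b ^ 2 := by
  have hlog : log b ≠ 2 * log b := by
    have := Real.log_ne_zero_of_pos_of_ne_one hb hb₁
    intro h; apply this; linarith
  have := strictConvexOn_exp.2 (mem_univ _) (mem_univ _) hlog
    (by linarith [hs.2] : 0 < 2 - s) (by linarith [hs.1] : 0 < s - 1) (by ring)
  rw [smul_eq_mul, smul_eq_mul, smul_eq_mul, smul_eq_mul, ← mul_assoc, ← add_mul,
    show 2 - s + (s - 1) * 2 = s by ring, exp_log hb,
    show 2 * log b = log (b ^ 2) by rw [log_pow]; norm_num, exp_log (by positivity),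
    mul_comm s, ← rpow_def_of_pos hb] at this
  exact this

theorem four_rpow_add_two_lt {s : ℝ} (hs : s ∈ Set.Ioo 1 2) :
    (4 : ℝ) ^ s + 2 < 2 * 3 ^ s := by
  have h₁ := rpow_lt_of_mem_Ioo_one_two (b := 4 / 3) (by norm_num) (by norm_num) hs
  have h₂ := rpow_lt_of_mem_Ioo_one_two (b := 1 / 3) (by norm_num) (by norm_num) hs
  rw [div_rpow (by norm_num) (by norm_num), div_lt_iff₀ (by positivity)] at h₁ h₂
  rw [one_rpow] at h₂
  nlinarith

noncomputable def windowIntegral (φ : ℝ → ℝ) (x : ℝ) : ℝ := ∫ y in x..x + 1, φ y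

theorem windowIntegral_eq_integral_Ioc (φ : ℝ → ℝ) (x : ℝ) :
    windowIntegral φ x = ∫ u in Ioc (0 : ℝ) 1, φ (x + u) := by
  rw [windowIntegral, ← intervalIntegral.integral_of_le zero_le_one,
    intervalIntegral.integral_comp_add_left, add_zero]

theorem windowIntegral_sq_le_mul {φ : ℝ → ℝ} {a x : ℝ}
    (hint : ∀ y ≥ a, IntervalIntegrable φ volume y (y + 1)) (hφ₀ : ∀ y > a, 0 ≤ φ y)
    (hφ : ∀ y > a, φ (y + 1) ^ 2 ≤ φ y * φ (y + 2)) (hx : a ≤ x) :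
    windowIntegral φ (x + 1) ^ 2 ≤ windowIntegral φ x * windowIntegral φ (x + 2) := by
  have hint' (c : ℝ) (hc : a ≤ c) :
      Integrable (fun u => φ (c + u)) (volume.restrict (Ioc 0 1)) := by
    have := (hint c hc).comp_add_left c
    rw [sub_self, add_sub_cancel_left] at this
    exact this.1
  simp only [windowIntegral_eq_integral_Ioc]
  have hpos : ∀ᵐ u ∂(volume.restrict (Ioc (0 : ℝ) 1)), 0 < u := by
    filter_upwards [ae_restrict_mem measurableSet_Ioc] with u hu using hu.1
  refine sq_integral_le_integral_mul_integral_of_sq_le_mul (hint' _ hx) (hint' _ (by linarith))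
    (hint' _ (by linarith)) ?_ ?_ ?_ <;> filter_upwards [hpos] with u hu
  · exact hφ₀ _ (by linarith)
  · exact hφ₀ _ (by linarith)
  · convert hφ (x + u) (by linarith) using 2 <;> ring_nf

theorem windowIntegral_rpow {r : ℝ} (hr : -1 < r) (x : ℝ) :
    windowIntegral (fun y => y ^ r) x = ((x + 1) ^ (r + 1) - x ^ (r + 1)) / (r + 1) :=
  integral_rpow (Or.inl hr)

theorem rpow_add_one_sq_le_mul {r x : ℝ} (hr : r ≤ 0) (hx : 0 < x) :
    ((x + 1) ^ r) ^ 2 ≤ x ^ r * (x + 2) ^ r := by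
  rw [sq, ← mul_rpow (by positivity) (by positivity), ← mul_rpow hx.le (by positivity)]
  exact rpow_le_rpow_of_nonpos (by positivity) (by nlinarith) hr

theorem windowIntegral_windowIntegral_rpow_sq_le {r x : ℝ} (hr₀ : -1 < r) (hr₁ : r ≤ 0)
    (hx : 0 ≤ x) :
    windowIntegral (windowIntegral (fun y => y ^ r)) (x + 1) ^ 2 ≤
      windowIntegral (windowIntegral (fun y => y ^ r)) x *
        windowIntegral (windowIntegral (fun y => y ^ r)) (x + 2) := by
  have hcont : Continuous (windowIntegral (fun y => y ^ r)) := by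
    have : 0 ≤ r + 1 := by linarith
    rw [funext (windowIntegral_rpow hr₀)]
    fun_prop (disch := assumption)
  refine windowIntegral_sq_le_mul (a := 0) (fun y _ => hcont.intervalIntegrable _ _)
    (fun y hy => ?_) (fun y hy => ?_) hx
  · exact intervalIntegral.integral_nonneg (by linarith)
      fun u hu => rpow_nonneg (hy.le.trans hu.1) _
  · exact windowIntegral_sq_le_mul (a := 0)
      (fun _ _ => intervalIntegral.intervalIntegrable_rpow' hr₀)
      (fun z hz => rpow_nonneg hz.le _) (fun z hz => rpow_add_one_sq_le_mul hr₁ hz) hy.le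

theorem windowIntegral_windowIntegral_rpow {r : ℝ} (hr : -1 < r) (x : ℝ) :
    windowIntegral (windowIntegral (fun y => y ^ r)) x =
      ((x + 2) ^ (r + 2) - 2 * (x + 1) ^ (r + 2) + x ^ (r + 2)) / ((r + 1) * (r + 2)) := by
  have hr' : -1 < r + 1 := by linarith
  have : 0 ≤ r + 1 := by linarith
  rw [windowIntegral, funext (windowIntegral_rpow hr), intervalIntegral.integral_div,
    intervalIntegral.integral_sub
      (Continuous.intervalIntegrable (by fun_prop (disch := assumption)) _ _)
      (intervalIntegral.intervalIntegrable_rpow' hr'),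
    intervalIntegral.integral_comp_add_right (fun y => y ^ (r + 1)), integral_rpow (Or.inl hr'),
    integral_rpow (Or.inl hr')]
  have : r + 1 ≠ 0 := by linarith
  have : r + 2 ≠ 0 := by linarith
  rw [show r + 1 + 1 = r + 2 by ring, show x + 1 + 1 = x + 2 by ring]
  field_simp
  ring

theorem rho_succ_eq {H : ℝ} (hH : 1 / 2 < H) (k : ℕ) :
    rho H (k + 1) =
      H * (2 * H - 1) * windowIntegral (windowIntegral (fun y => y ^ (2 * H - 2))) k := by
  rw [windowIntegral_windowIntegral_rpow (by linarith), rho, if_neg k.succ_ne_zero]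
  push_cast
  rw [show 2 * H - 2 + 2 = 2 * H by ring, show 2 * H - 2 + 1 = 2 * H - 1 by ring,
    show (k : ℝ) + 1 + 1 = k + 2 by ring, add_sub_cancel_right]
  have : 2 * H - 1 ≠ 0 := by linarith
  have : H ≠ 0 := by linarith
  field_simp

theorem rho_zero (H : ℝ) : rho H 0 = 1 := if_pos rfl

theorem rho_pos {H : ℝ} (hH : 1 / 2 < H) (k : ℕ) : 0 < rho H k := by
  rcases k.eq_zero_or_pos with rfl | hk
  · simp [rho_zero]
  rw [rho, if_neg hk.ne']
  have hk₁ : (1 : ℝ) ≤ k := by exact_mod_cast hk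
  have hconv := (strictConvexOn_rpow (by linarith : (1 : ℝ) < 2 * H)).2
    (Set.mem_Ici.2 (by linarith) : (k : ℝ) - 1 ∈ Set.Ici 0)
    (Set.mem_Ici.2 (by linarith) : (k : ℝ) + 1 ∈ Set.Ici 0) (by linarith)
    (by norm_num : (0 : ℝ) < 1 / 2) (by norm_num : (0 : ℝ) < 1 / 2) (by norm_num)
  simp only [smul_eq_mul, show 1 / 2 * ((k : ℝ) - 1) + 1 / 2 * (k + 1) = k by ring] at hconv
  linarith

theorem rho_one_sq_lt_rho_two {H : ℝ} (hH : H ∈ Ioo (1 / 2 : ℝ) 1) : rho H 1 ^ 2 < rho H 2 := by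
  have h2H : 2 * H ≠ 0 := by linarith [hH.1]
  have hkey := four_rpow_add_two_lt (s := 2 * H) ⟨by linarith [hH.1], by linarith [hH.2]⟩
  rw [show (4 : ℝ) = 2 * 2 by norm_num, mul_rpow (by norm_num) (by norm_num)] at hkey
  simp only [rho, one_ne_zero, OfNat.ofNat_ne_zero, if_false, Nat.cast_one, Nat.cast_ofNat,
    sub_self, zero_rpow h2H, one_rpow]
  norm_num
  nlinarith

theorem rho_sq_le_mul {H : ℝ} (hH : H ∈ Ioo (1 / 2 : ℝ) 1) (k : ℕ) :
    rho H (k + 1) ^ 2 ≤ rho H k * rho H (k + 2) := by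
  rcases k with _ | k
  · simpa [rho_zero] using (rho_one_sq_lt_rho_two hH).le
  have hW := windowIntegral_windowIntegral_rpow_sq_le (r := 2 * H - 2) (x := k)
    (by linarith [hH.1]) (by linarith [hH.2]) k.cast_nonneg
  rw [show k + 1 + 2 = (k + 2) + 1 by ring, rho_succ_eq hH.1, rho_succ_eq hH.1,
    rho_succ_eq hH.1]
  push_cast
  nlinarith [mul_le_mul_of_nonneg_left hW (sq_nonneg (H * (2 * H - 1)))]

theorem rho_ratio_monotone {H : ℝ} (hH : H ∈ Ioo (1 / 2 : ℝ) 1) :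
    Monotone fun k => rho H (k + 1) / rho H k := by
  refine monotone_nat_of_le_succ fun k => ?_
  rw [div_le_div_iff₀ (rho_pos hH.1 k) (rho_pos hH.1 (k + 1))]
  nlinarith [rho_sq_le_mul hH k]

theorem rho_one_lt_ratio {H : ℝ} (hH : H ∈ Ioo (1 / 2 : ℝ) 1) {m : ℕ} (hm : 1 ≤ m) :
    rho H 1 < rho H (m + 1) / rho H m := by
  have h₀₁ : rho H 1 < rho H 2 / rho H 1 := by
    rw [lt_div_iff₀ (rho_pos hH.1 1)]
    nlinarith [rho_one_sq_lt_rho_two hH]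
  exact h₀₁.trans_le (rho_ratio_monotone hH hm)

theorem rho_succ_le_mul_ratio {H : ℝ} (hH : H ∈ Ioo (1 / 2 : ℝ) 1) {j m : ℕ} (hjm : j ≤ m) :
    rho H (j + 1) ≤ rho H j * (rho H (m + 1) / rho H m) := by
  rw [mul_comm, ← div_le_iff₀ (rho_pos hH.1 j)]
  exact rho_ratio_monotone hH hjm

theorem stmt_4 (H : ℝ) (hH : H ∈ Ioo (1 / 2 : ℝ) 1) (n : ℕ) (hn : 2 ≤ n)
    (Γ : ℕ → ℝ)
    (hsys : ∀ l, 2 ≤ l → l ≤ n →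
      rho H (l - 1) = ∑ k ∈ Finset.Icc 2 n, Γ k * rho H ((l : ℤ) - (k : ℤ)).natAbs)
    (hpos : ∀ k, 2 ≤ k → k ≤ n → 0 < Γ k) :
    0 < rho H n - ∑ k ∈ Finset.Icc 2 n, Γ k * rho H (n + 1 - k) ∧
    (0 < 1 - ∑ k ∈ Finset.Icc 2 n, Γ k * rho H (k - 1) →
      0 < (rho H n - ∑ k ∈ Finset.Icc 2 n, Γ k * rho H (n + 1 - k))
          / (1 - ∑ k ∈ Finset.Icc 2 n, Γ k * rho H (k - 1))) := by
  set R := rho H (n - 1 + 1) / rho H (n - 1)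
  have hR : rho H (n - 1) * R = rho H n := by
    rw [mul_div_cancel₀ _ (rho_pos hH.1 _).ne', Nat.sub_add_cancel (by omega)]
  have hsys_n : rho H (n - 1) = ∑ k ∈ Finset.Icc 2 n, Γ k * rho H (n - k) := by
    rw [hsys n hn le_rfl]
    refine sum_congr rfl fun k hk => ?_
    rw [show ((n : ℤ) - k).natAbs = n - k by have := (Finset.mem_Icc.1 hk).2; omega]
  have hterm : ∀ k ∈ Finset.Icc 2 n, Γ k * rho H (n + 1 - k) ≤ Γ k * rho H (n - k) * R := by
    intro k hk
    obtain ⟨hk₂, hkn⟩ := mem_Icc.1 hk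
    rw [mul_assoc, show n + 1 - k = n - k + 1 by omega]
    exact mul_le_mul_of_nonneg_left (rho_succ_le_mul_ratio hH (by omega)) (hpos k hk₂ hkn).le
  have hlast : Γ n * rho H (n + 1 - n) < Γ n * rho H (n - n) * R := by
    rw [Nat.add_sub_cancel_left, Nat.sub_self, rho_zero, mul_one]
    exact mul_lt_mul_of_pos_left (rho_one_lt_ratio hH (by omega)) (hpos n hn le_rfl)
  have hlt := sum_lt_sum hterm ⟨n, Finset.mem_Icc.2 ⟨hn, le_rfl⟩, hlast⟩
  rw [← sum_mul, ← hsys_n, hR] at hlt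
  exact ⟨sub_pos.2 hlt, div_pos (sub_pos.2 hlt)⟩
end

section
/- For every H ∈ (1/2, 1), the inequality 1 + ρ_4(H) > ρ_1(H) + ρ_3(H) holds; equivalently, 1 − ρ_1(H) > ρ_3(H) − ρ_4(H). -/
open Real Set Finset

private lemma sum6_neg (x : ℝ) : ∑ m ∈ Finset.range 6, (-x) ^ m / m.factorial
    = 1 - x + x^2/2 - x^3/6 + x^4/24 - x^5/120 := by
  simp [Finset.sum_range_succ, Nat.factorial]
  ring

private lemma sum4_pos (y : ℝ) : ∑ m ∈ Finset.range 4, y ^ m / m.factorial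
    = 1 + y + y^2/2 + y^3/6 := by
  simp [Finset.sum_range_succ, Nat.factorial]

private lemma exp_neg_lb {x : ℝ} (h0 : 0 ≤ x) (h1 : x ≤ 1) :
    1 - x + x^2/2 - x^3/6 ≤ Real.exp (-x) := by
  have habs : |(-x)| ≤ 1 := by rw [abs_neg, abs_of_nonneg h0]; exact h1
  have hb := Real.exp_bound habs (n := 6) (by norm_num)
  rw [sum6_neg, abs_neg, abs_of_nonneg h0] at hb
  have hb' := (abs_le.mp hb).1
  have h46 : x^6 ≤ x^4 := pow_le_pow_of_le_one h0 h1 (by norm_num)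
  have h45 : x^5 ≤ x^4 := pow_le_pow_of_le_one h0 h1 (by norm_num)
  have h4 : (0:ℝ) ≤ x^4 := by positivity
  norm_num [Nat.factorial] at hb'
  linarith

private lemma exp_neg_ub {x : ℝ} (h0 : 0 ≤ x) (h1 : x ≤ 1) :
    Real.exp (-x) ≤ 1 - x + x^2/2 - x^3/6 + x^4/22 := by
  have habs : |(-x)| ≤ 1 := by rw [abs_neg, abs_of_nonneg h0]; exact h1
  have hb := Real.exp_bound habs (n := 6) (by norm_num)
  rw [sum6_neg, abs_neg, abs_of_nonneg h0] at hb
  have hb' := (abs_le.mp hb).2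
  have h46 : x^6 ≤ x^4 := pow_le_pow_of_le_one h0 h1 (by norm_num)
  have h5 : (0:ℝ) ≤ x^5 := by positivity
  have h4 : (0:ℝ) ≤ x^4 := by positivity
  norm_num [Nat.factorial] at hb'
  linarith

private lemma exp_pos_lb {x : ℝ} (h0 : 0 ≤ x) :
    1 + x + x^2/2 + x^3/6 ≤ Real.exp x := by
  have := Real.sum_le_exp_of_nonneg h0 4
  rwa [sum4_pos] at this

private lemma exp_pos_ub {x : ℝ} (h0 : 0 ≤ x) (h1 : x ≤ 1) :
    Real.exp x ≤ 1 + x + x^2/2 + x^3/6 + x^4/17 := by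
  have hb := Real.exp_bound' h0 h1 (n := 4) (by norm_num)
  rw [sum4_pos] at hb
  have h4 : (0:ℝ) ≤ x^4 := by positivity
  norm_num [Nat.factorial] at hb
  linarith

private lemma log3_bounds : 1.0985 < Real.log 3 ∧ Real.log 3 < 1.0987 := by
  have l2l := Real.log_two_gt_d9
  have l2u := Real.log_two_lt_d9
  constructor
  · have h : (2:ℝ)^(84:ℕ) < 3^(53:ℕ) := by norm_num
    have h2 := Real.log_lt_log (by positivity) h
    rw [Real.log_pow, Real.log_pow] at h2
    push_cast at h2
    nlinarith
  · have h : (3:ℝ)^(147:ℕ) < 2^(233:ℕ) := by norm_num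
    have h2 := Real.log_lt_log (by positivity) h
    rw [Real.log_pow, Real.log_pow] at h2
    push_cast at h2
    nlinarith

private lemma log5_bounds : 1.6090 < Real.log 5 ∧ Real.log 5 < 1.6096 := by
  have l2l := Real.log_two_gt_d9
  have l2u := Real.log_two_lt_d9
  constructor
  · have h : (2:ℝ)^(65:ℕ) < 5^(28:ℕ) := by norm_num
    have h2 := Real.log_lt_log (by positivity) h
    rw [Real.log_pow, Real.log_pow] at h2
    push_cast at h2
    nlinarith
  · have h : (5:ℝ)^(59:ℕ) < 2^(137:ℕ) := by norm_num
    have h2 := Real.log_lt_log (by positivity) h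
    rw [Real.log_pow, Real.log_pow] at h2
    push_cast at h2
    nlinarith

private lemma log4_eq : Real.log 4 = 2 * Real.log 2 := by
  rw [show (4:ℝ) = 2^(2:ℕ) by norm_num, Real.log_pow]
  norm_num

set_option maxHeartbeats 1600000 in
private lemma key {a : ℝ} (ha1 : 1 < a) (ha2 : a < 2) :
    2 * (2:ℝ) ^ a + 3 * (4:ℝ) ^ a < 4 + 3 * (3:ℝ) ^ a + (5:ℝ) ^ a := by
  obtain ⟨l3l, l3u⟩ := log3_bounds
  obtain ⟨l5l, l5u⟩ := log5_bounds
  have l2l := Real.log_two_gt_d9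
  have l2u := Real.log_two_lt_d9
  rcases le_or_gt (1.45 : ℝ) a with hA | hB
  · -- a ∈ [1.45, 2) : write a = 2 - s
    obtain ⟨s, rfl⟩ : ∃ s, a = 2 - s := ⟨2 - a, by ring⟩
    have hs0 : 0 < s := by linarith
    have hs1 : s ≤ 0.55 := by linarith
    have pe : ∀ c : ℝ, 0 < c → c ^ ((2:ℝ) - s) = c * c * Real.exp (-(Real.log c * s)) := by
      intro c hc
      rw [Real.rpow_def_of_pos hc,
        show Real.log c * (2 - s) = Real.log c + (Real.log c + -(Real.log c * s)) by ring,
        Real.exp_add, Real.exp_add, Real.exp_log hc]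
      ring
    rw [pe 2 (by norm_num), pe 3 (by norm_num), pe 4 (by norm_num), pe 5 (by norm_num), log4_eq]
    have m5 : Real.log 5 * s ≤ 1.6096 * s := mul_le_mul_of_nonneg_right l5u.le hs0.le
    have m3 : Real.log 3 * s ≤ 1.0987 * s := mul_le_mul_of_nonneg_right l3u.le hs0.le
    have m2 : 0.6931 * s ≤ Real.log 2 * s :=
      mul_le_mul_of_nonneg_right (by linarith) hs0.le
    have m4 : 1.3862 * s ≤ 2 * Real.log 2 * s :=
      mul_le_mul_of_nonneg_right (by linarith) hs0.le
    have b5 : (1:ℝ) - (1.6096*s) + (1.6096*s)^2/2 - (1.6096*s)^3/6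
        ≤ Real.exp (-(Real.log 5 * s)) :=
      le_trans (exp_neg_lb (by linarith) (by linarith)) (Real.exp_le_exp.mpr (by linarith))
    have b3 : (1:ℝ) - (1.0987*s) + (1.0987*s)^2/2 - (1.0987*s)^3/6
        ≤ Real.exp (-(Real.log 3 * s)) :=
      le_trans (exp_neg_lb (by linarith) (by linarith)) (Real.exp_le_exp.mpr (by linarith))
    have b2 : Real.exp (-(Real.log 2 * s))
        ≤ 1 - (0.6931*s) + (0.6931*s)^2/2 - (0.6931*s)^3/6 + (0.6931*s)^4/22 :=
      le_trans (Real.exp_le_exp.mpr (by linarith)) (exp_neg_ub (by linarith) (by linarith))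
    have b4 : Real.exp (-(2 * Real.log 2 * s))
        ≤ 1 - (1.3862*s) + (1.3862*s)^2/2 - (1.3862*s)^3/6 + (1.3862*s)^4/22 :=
      le_trans (Real.exp_le_exp.mpr (by linarith)) (exp_neg_ub (by linarith) (by linarith))
    nlinarith [b5, b3, b2, b4, mul_pos hs0 hs0, mul_pos (mul_pos hs0 hs0) hs0,
      mul_nonneg (mul_nonneg hs0.le hs0.le) (sub_nonneg.mpr hs1),
      mul_nonneg (mul_nonneg (mul_nonneg hs0.le hs0.le) hs0.le) (sub_nonneg.mpr hs1)]
  · -- a ∈ (1, 1.45) : write a = 1 + t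
    obtain ⟨t, rfl⟩ : ∃ t, a = 1 + t := ⟨a - 1, by ring⟩
    have ht0 : 0 < t := by linarith
    have ht1 : t ≤ 0.45 := by linarith
    have pe : ∀ c : ℝ, 0 < c → c ^ ((1:ℝ) + t) = c * Real.exp (Real.log c * t) := by
      intro c hc
      rw [Real.rpow_def_of_pos hc,
        show Real.log c * (1 + t) = Real.log c + Real.log c * t by ring,
        Real.exp_add, Real.exp_log hc]
    rw [pe 2 (by norm_num), pe 3 (by norm_num), pe 4 (by norm_num), pe 5 (by norm_num), log4_eq]
    have m5 : 1.6090 * t ≤ Real.log 5 * t := mul_le_mul_of_nonneg_right l5l.le ht0.le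
    have m3 : 1.0985 * t ≤ Real.log 3 * t := mul_le_mul_of_nonneg_right l3l.le ht0.le
    have m2 : Real.log 2 * t ≤ 0.69315 * t :=
      mul_le_mul_of_nonneg_right (by linarith) ht0.le
    have m4 : 2 * Real.log 2 * t ≤ 1.3863 * t :=
      mul_le_mul_of_nonneg_right (by linarith) ht0.le
    have b5 : (1:ℝ) + (1.6090*t) + (1.6090*t)^2/2 + (1.6090*t)^3/6
        ≤ Real.exp (Real.log 5 * t) :=
      le_trans (exp_pos_lb (by linarith)) (Real.exp_le_exp.mpr (by linarith))
    have b3 : (1:ℝ) + (1.0985*t) + (1.0985*t)^2/2 + (1.0985*t)^3/6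
        ≤ Real.exp (Real.log 3 * t) :=
      le_trans (exp_pos_lb (by linarith)) (Real.exp_le_exp.mpr (by linarith))
    have b2 : Real.exp (Real.log 2 * t)
        ≤ 1 + (0.69315*t) + (0.69315*t)^2/2 + (0.69315*t)^3/6 + (0.69315*t)^4/17 :=
      le_trans (Real.exp_le_exp.mpr (by linarith)) (exp_pos_ub (by linarith) (by linarith))
    have b4 : Real.exp (2 * Real.log 2 * t)
        ≤ 1 + (1.3863*t) + (1.3863*t)^2/2 + (1.3863*t)^3/6 + (1.3863*t)^4/17 :=
      le_trans (Real.exp_le_exp.mpr (by linarith)) (exp_pos_ub (by linarith) (by linarith))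
    nlinarith [b5, b3, b2, b4, mul_pos ht0 ht0, mul_pos (mul_pos ht0 ht0) ht0,
      mul_nonneg (mul_nonneg ht0.le ht0.le) (sub_nonneg.mpr ht1),
      mul_nonneg (mul_nonneg (mul_nonneg ht0.le ht0.le) ht0.le) (sub_nonneg.mpr ht1)]

theorem stmt_6 (H : ℝ) (hH : H ∈ Ioo (1 / 2 : ℝ) 1) :
    rho H 1 + rho H 3 < 1 + rho H 4 ∧ rho H 3 - rho H 4 < 1 - rho H 1 := by
  obtain ⟨hH1, hH2⟩ := hH
  have ha1 : 1 < 2 * H := by linarith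
  have ha2 : 2 * H < 2 := by linarith
  have hne : 2 * H ≠ 0 := by linarith
  have r1 : rho H 1 = ((2:ℝ) ^ (2*H) - 2) / 2 := by
    simp only [rho, if_neg (by norm_num : ¬ (1:ℕ) = 0)]
    norm_num [Real.one_rpow, Real.zero_rpow hne]
  have r3 : rho H 3 = ((4:ℝ) ^ (2*H) - 2 * (3:ℝ) ^ (2*H) + (2:ℝ) ^ (2*H)) / 2 := by
    simp only [rho, if_neg (by norm_num : ¬ (3:ℕ) = 0)]
    norm_num
  have r4 : rho H 4 = ((5:ℝ) ^ (2*H) - 2 * (4:ℝ) ^ (2*H) + (3:ℝ) ^ (2*H)) / 2 := by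
    simp only [rho, if_neg (by norm_num : ¬ (4:ℕ) = 0)]
    norm_num
  have k := key ha1 ha2
  rw [r1, r3, r4]
  constructor <;> linarith
end

section
/- For every H ∈ (1/2, 1), the determinant D_2^*(H) := (1 + ρ_2)(1 + ρ_4) − (ρ_1 + ρ_3)² is strictly positive, where ρ_k = ρ_k(H). -/
/-!
Put `p = 2H ∈ (1, 2)` and `s k = (k+2)^p - 2(k+1)^p + k^p`, so that `ρ_{k+1} = s k / 2`.
The sequence `s` is strictly decreasing and strictly convex, `s 0 = 2^p - 2 < 2`, and
`4^p = (2^p)^2` gives the relation `s 2 + 2 s 1 = s 0 (s 0 + 1)`. These facts alone force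
`(s 0 + s 2)^2 < (2 + s 1)(2 + s 3)`, which is `D_2^* > 0`.
-/

open Real Set Finset

noncomputable def rpowSecondDiff (p t : ℝ) : ℝ := (t + 2) ^ p - 2 * (t + 1) ^ p + t ^ p

theorem rho_succ (H : ℝ) (k : ℕ) : rho H (k + 1) = rpowSecondDiff (2 * H) k / 2 := by
  simp only [rho, rpowSecondDiff, Nat.succ_ne_zero, if_false]
  push_cast
  ring_nf

section rpowSecondDiff

variable {p t : ℝ}

theorem rpowSecondDiff_zero (hp : p ≠ 0) : rpowSecondDiff p 0 = 2 ^ p - 2 := by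
  simp [rpowSecondDiff, Real.zero_rpow hp]

/-- This is `4^p = (2^p)^2`. -/
theorem rpowSecondDiff_two_add_two_mul_one (hp : p ≠ 0) :
    rpowSecondDiff p 2 + 2 * rpowSecondDiff p 1 =
      rpowSecondDiff p 0 * (rpowSecondDiff p 0 + 1) := by
  have h4 : (4 : ℝ) ^ p = (2 ^ p) ^ 2 := by
    rw [← Real.rpow_natCast, ← Real.rpow_mul (by norm_num), mul_comm,
      Real.rpow_mul (by norm_num)]
    norm_num
  rw [rpowSecondDiff_zero hp]
  simp only [rpowSecondDiff]
  norm_num [h4]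
  ring

theorem rpowSecondDiff_pos_of_neg (hp : p < 0) (ht : 0 < t) : 0 < rpowSecondDiff p t := by
  set u := t ^ (p / 2)
  set v := (t + 2) ^ (p / 2)
  have hsq {x : ℝ} (hx : 0 < x) : x ^ (p / 2) * x ^ (p / 2) = x ^ p := by
    rw [← Real.rpow_add hx, add_halves]
  have hmid : (t + 1) ^ p < u * v := by
    calc (t + 1) ^ p = ((t + 1) ^ 2) ^ (p / 2) := by
          rw [← Real.rpow_natCast, ← Real.rpow_mul (by positivity), Nat.cast_ofNat,
            mul_div_cancel₀ _ two_ne_zero]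
      _ < (t * (t + 2)) ^ (p / 2) :=
          Real.rpow_lt_rpow_of_neg (by positivity) (by nlinarith) (by linarith)
      _ = u * v := Real.mul_rpow ht.le (by positivity)
  have hamgm : 2 * (u * v) ≤ t ^ p + (t + 2) ^ p := by
    rw [← hsq ht, ← hsq (by positivity : (0 : ℝ) < t + 2)]
    nlinarith [sq_nonneg (u - v)]
  unfold rpowSecondDiff
  linarith

theorem rpowSecondDiff_neg (hp₀ : 0 < p) (hp₁ : p < 1) (ht : 0 ≤ t) :
    rpowSecondDiff p t < 0 := by
  have h := (Real.strictConcaveOn_rpow hp₀ hp₁).2 (mem_Ici.2 ht)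
    (mem_Ici.2 (by linarith : (0 : ℝ) ≤ t + 2)) (by norm_num)
    (by norm_num : (0 : ℝ) < 1 / 2) (by norm_num : (0 : ℝ) < 1 / 2) (by norm_num)
  rw [smul_eq_mul, smul_eq_mul, smul_eq_mul, smul_eq_mul,
    show (1 / 2 : ℝ) * t + 1 / 2 * (t + 2) = t + 1 by ring] at h
  unfold rpowSecondDiff
  linarith

theorem hasDerivAt_rpowSecondDiff (ht : 0 < t) :
    HasDerivAt (rpowSecondDiff p) (p * rpowSecondDiff (p - 1) t) t := by
  have hshift {c : ℝ} (hc : 0 ≤ c) :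
      HasDerivAt (fun s : ℝ => (s + c) ^ p) (1 * p * (t + c) ^ (p - 1)) t :=
    ((hasDerivAt_id t).add_const c).rpow_const (Or.inl (by simp only [id_eq]; positivity))
  have hsum := ((hshift zero_le_two).sub ((hshift zero_le_one).const_mul 2)).add
    ((hasDerivAt_id t).rpow_const (p := p) (Or.inl ht.ne'))
  exact hsum.congr_deriv (by simp only [rpowSecondDiff, id_eq]; ring)

theorem continuous_rpowSecondDiff (hp : 0 ≤ p) : Continuous (rpowSecondDiff p) := by
  unfold rpowSecondDiff
  fun_prop (disch := exact hp)

theorem strictMonoOn_rpowSecondDiff (hp₀ : 0 < p) (hp₁ : p < 1) :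
    StrictMonoOn (rpowSecondDiff p) (Ici 0) := by
  refine strictMonoOn_of_deriv_pos (convex_Ici 0) (continuous_rpowSecondDiff hp₀.le).continuousOn
    fun t ht => ?_
  rw [interior_Ici] at ht
  rw [(hasDerivAt_rpowSecondDiff ht).deriv]
  exact mul_pos hp₀ (rpowSecondDiff_pos_of_neg (by linarith) ht)

theorem strictAntiOn_rpowSecondDiff (hp₁ : 1 < p) (hp₂ : p < 2) :
    StrictAntiOn (rpowSecondDiff p) (Ici 0) := by
  refine strictAntiOn_of_deriv_neg (convex_Ici 0)
    (continuous_rpowSecondDiff (by linarith)).continuousOn fun t ht => ?_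
  rw [interior_Ici] at ht
  rw [(hasDerivAt_rpowSecondDiff ht).deriv]
  exact mul_neg_of_pos_of_neg (by linarith) (rpowSecondDiff_neg (by linarith) (by linarith) ht.le)

theorem strictConvexOn_rpowSecondDiff (hp₁ : 1 < p) (hp₂ : p < 2) :
    StrictConvexOn ℝ (Ici 0) (rpowSecondDiff p) := by
  refine StrictMonoOn.strictConvexOn_of_deriv (convex_Ici 0)
    (continuous_rpowSecondDiff (by linarith)).continuousOn fun s hs t ht hst => ?_
  rw [interior_Ici] at hs ht
  rw [(hasDerivAt_rpowSecondDiff hs).deriv, (hasDerivAt_rpowSecondDiff ht).deriv]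
  have hmono := strictMonoOn_rpowSecondDiff (p := p - 1) (by linarith) (by linarith)
  exact mul_lt_mul_of_pos_left (hmono (mem_Ici_of_Ioi hs) (mem_Ici_of_Ioi ht) hst) (by linarith)

end rpowSecondDiff

theorem sq_add_lt_mul_of_antitone_convex {u s₁ s₂ s₃ : ℝ} (hu : u < 2) (h₁₀ : s₁ < u)
    (h₂₁ : s₂ < s₁) (hconv : 2 * s₂ < s₁ + s₃) (hrel : s₂ + 2 * s₁ = u * (u + 1)) :
    (u + s₂) ^ 2 < (2 + s₁) * (2 + s₃) := by
  have hu₀ : 0 < u := by nlinarith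
  have h2u : 0 < 2 - u := sub_pos.2 hu
  have hgap₀ : 0 < s₁ - s₂ := sub_pos.2 h₂₁
  have hgap₁ : s₁ - s₂ < u * (2 - u) := by nlinarith
  have hcubic : u ^ 2 * (2 - u) < 2 + u + 2 * s₂ := by
    nlinarith [mul_nonneg hu₀.le (sq_nonneg (u - 1)), sq_nonneg (u - 1 / 2)]
  have hgap : (s₁ - s₂) ^ 2 < (2 - u) * (2 + u + 2 * s₂) :=
    calc (s₁ - s₂) ^ 2 < (s₁ - s₂) * (u * (2 - u)) := by rw [sq]; gcongr
      _ = (2 - u) * (u * (s₁ - s₂)) := by ring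
      _ < (2 - u) * (u * (u * (2 - u))) := by gcongr
      _ = (2 - u) * (u ^ 2 * (2 - u)) := by ring
      _ < (2 - u) * (2 + u + 2 * s₂) := by gcongr
  have hs₁ : 0 < s₁ := by nlinarith
  calc (u + s₂) ^ 2 = (2 + s₂) ^ 2 - (2 - u) * (2 + u + 2 * s₂) := by ring
    _ < (2 + s₂) ^ 2 - (s₁ - s₂) ^ 2 := by linarith
    _ = (2 + s₁) * (2 + 2 * s₂ - s₁) := by ring
    _ < (2 + s₁) * (2 + s₃) := by gcongr; linarith

theorem stmt_7 (H : ℝ) (hH : H ∈ Ioo (1 / 2 : ℝ) 1) :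
    0 < (1 + rho H 2) * (1 + rho H 4) - (rho H 1 + rho H 3) ^ 2 := by
  set p := 2 * H
  have hp₁ : 1 < p := by linarith [hH.1]
  have hp₂ : p < 2 := by linarith [hH.2]
  have hs₀ : rpowSecondDiff p 0 < 2 := by
    rw [rpowSecondDiff_zero (by linarith)]
    linarith [Real.rpow_lt_rpow_of_exponent_lt one_lt_two hp₂, Real.rpow_two (2 : ℝ)]
  have hanti := strictAntiOn_rpowSecondDiff hp₁ hp₂
  have hconv := (strictConvexOn_rpowSecondDiff hp₁ hp₂).2 (mem_Ici.2 zero_le_one)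
    (mem_Ici.2 zero_le_three) (by norm_num) one_half_pos one_half_pos (add_halves 1)
  norm_num at hconv
  have key := sq_add_lt_mul_of_antitone_convex hs₀
    (hanti (mem_Ici.2 le_rfl) (mem_Ici.2 zero_le_one) zero_lt_one)
    (hanti (mem_Ici.2 zero_le_one) (mem_Ici.2 zero_le_two) one_lt_two) (by linarith)
    (rpowSecondDiff_two_add_two_mul_one (by linarith))
  have hρ (k : ℕ) : rho H (k + 1) = rpowSecondDiff p k / 2 := rho_succ H k
  rw [show rho H 1 = _ by simpa using hρ 0, show rho H 2 = _ by simpa using hρ 1,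
    show rho H 3 = _ by simpa using hρ 2, show rho H 4 = _ by simpa using hρ 3]
  linarith
end

section
/- As H tends to 1 from the left, D_{3,2}^*(H) tends to 0 and the derivative (d/dH) D_{3,2}^*(H) tends to 0; equivalently, viewing D_{3,2}^* as a smooth function of H on (0, 1], D_{3,2}^*(1) = 0 and its first derivative at H = 1 equals 0. -/
open Real Set Finset

/-- The Cramer numerator determinant `D_{3,2}^*(H)` for the bilateral projection with `n = 4`. -/
noncomputable def D32 (H : ℝ) : ℝ :=
  Matrix.det !![1 + rho H 6, rho H 3, rho H 2 + rho H 4;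
                rho H 1 + rho H 5, rho H 2, rho H 1 + rho H 3;
                rho H 2 + rho H 4, rho H 1, 1 + rho H 2]

/-! At `H = 1` every `ρ_k` equals `1`, so all three rows of the matrix defining `D_{3,2}^*(1)` are
`(2, 1, 2)`. The determinant is multilinear in the rows, so its derivative is a sum of determinants
in which only one row is differentiated; at `H = 1` each still has two equal rows. Hence both
`D_{3,2}^*` and its derivative vanish at `1`, and since `H ↦ ρ_k(H)` is smooth on `(0, ∞)` these
values are also the one-sided limits. -/

theorem ContDiffOn.matrix_det {𝕜 E ι : Type*} [NontriviallyNormedField 𝕜] [NormedAddCommGroup E]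
    [NormedSpace 𝕜 E] [Fintype ι] [DecidableEq ι] {n : WithTop ℕ∞} {s : Set E}
    {M : E → Matrix ι ι 𝕜} (hM : ∀ i j, ContDiffOn 𝕜 n (fun x => M x i j) s) :
    ContDiffOn 𝕜 n (fun x => (M x).det) s := by
  simp only [Matrix.det_apply]
  exact ContDiffOn.sum fun σ _ => (contDiffOn_prod fun i _ => hM _ _).const_smul _

theorem hasDerivAt_det_fin_three_of_rows_eq {M : ℝ → Matrix (Fin 3) (Fin 3) ℝ} {x : ℝ}
    (hM : ∀ i j, DifferentiableAt ℝ (fun t => M t i j) x) (hrows : ∀ i, M x i = M x 0) :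
    HasDerivAt (fun t => (M t).det) 0 x := by
  -- by the product rule, each term of the derivative keeps two of the (equal) rows of `M x`
  have h i j := (hM i j).hasDerivAt
  have hrow i j : M x i j = M x 0 j := congrFun (hrows i) j
  simp only [Matrix.det_fin_three]
  refine (((((((h 0 0).fun_mul (h 1 1)).fun_mul (h 2 2)).sub
    (((h 0 0).fun_mul (h 1 2)).fun_mul (h 2 1))).sub
    (((h 0 1).fun_mul (h 1 0)).fun_mul (h 2 2))).add
    (((h 0 1).fun_mul (h 1 2)).fun_mul (h 2 0))).add
    (((h 0 2).fun_mul (h 1 0)).fun_mul (h 2 1))).sub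
    (((h 0 2).fun_mul (h 1 1)).fun_mul (h 2 0)) |>.congr_deriv ?_
  simp only [hrow 1, hrow 2]
  ring

theorem rho_one_s12 (k : ℕ) : rho 1 k = 1 := by
  unfold rho
  split_ifs
  · rfl
  · norm_num [Real.rpow_two]
    ring

theorem contDiffOn_const_rpow {a : ℝ} (ha : 0 ≤ a) {n : WithTop ℕ∞} :
    ContDiffOn ℝ n (fun y : ℝ => a ^ y) (Ioi 0) := by
  -- `0 ^ y = 0` holds only for `y ≠ 0` (`0 ^ 0 = 1`), hence the domain `y > 0`
  rcases ha.eq_or_lt with rfl | ha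
  · exact contDiffOn_const.congr fun y hy => Real.zero_rpow (ne_of_gt hy)
  · exact (contDiff_const.rpow contDiff_id fun _ => ha.ne').contDiffOn

theorem contDiffOn_rho (k : ℕ) {n : WithTop ℕ∞} : ContDiffOn ℝ n (fun H => rho H k) (Ioi 0) := by
  unfold rho
  rcases Nat.eq_zero_or_pos k with rfl | hk
  · simpa using contDiffOn_const
  have hpow {a : ℝ} (ha : 0 ≤ a) : ContDiffOn ℝ n (fun H : ℝ => a ^ (2 * H)) (Ioi 0) :=
    (contDiffOn_const_rpow ha).comp (contDiff_const.mul contDiff_id).contDiffOn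
      fun H (hH : 0 < H) => mul_pos two_pos hH
  have hk' : (0 : ℝ) ≤ k - 1 := sub_nonneg.2 (by exact_mod_cast hk)
  simp only [hk.ne', if_false]
  exact (((hpow (by positivity)).sub ((hpow (by positivity)).const_smul (2 : ℝ))).add
    (hpow hk')).div_const 2

noncomputable def D32Matrix (H : ℝ) : Matrix (Fin 3) (Fin 3) ℝ :=
  !![1 + rho H 6, rho H 3, rho H 2 + rho H 4;
     rho H 1 + rho H 5, rho H 2, rho H 1 + rho H 3;
     rho H 2 + rho H 4, rho H 1, 1 + rho H 2]

theorem contDiffOn_D32Matrix_apply (i j : Fin 3) {n : WithTop ℕ∞} :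
    ContDiffOn ℝ n (fun H => D32Matrix H i j) (Ioi 0) := by
  have hρ k := contDiffOn_rho k (n := n)
  fin_cases i <;> fin_cases j <;>
    simp only [D32Matrix, Fin.zero_eta, Fin.mk_one, Fin.reduceFinMk, Fin.isValue, Matrix.of_apply,
      Matrix.cons_val', Matrix.cons_val, Matrix.cons_val_zero, Matrix.cons_val_one,
      Matrix.cons_val_fin_one] <;>
    fun_prop

theorem D32Matrix_one_row (i : Fin 3) : D32Matrix 1 i = D32Matrix 1 0 := by
  fin_cases i <;> ext j <;> fin_cases j <;> simp [D32Matrix, rho_one_s12]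

theorem contDiffOn_D32 {n : WithTop ℕ∞} : ContDiffOn ℝ n D32 (Ioi 0) :=
  ContDiffOn.matrix_det fun i j => contDiffOn_D32Matrix_apply i j

theorem D32_one : D32 1 = 0 :=
  Matrix.det_zero_of_row_eq one_ne_zero (D32Matrix_one_row 1)

theorem hasDerivAt_D32_one : HasDerivAt D32 0 1 :=
  hasDerivAt_det_fin_three_of_rows_eq
    (fun i j => ((contDiffOn_D32Matrix_apply i j).differentiableOn one_ne_zero).differentiableAt
      (Ioi_mem_nhds one_pos))
    D32Matrix_one_row

theorem stmt_12 :
    Filter.Tendsto D32 (nhdsWithin 1 (Iio (1 : ℝ))) (nhds 0) ∧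
    Filter.Tendsto (deriv D32) (nhdsWithin 1 (Iio (1 : ℝ))) (nhds 0) ∧
    D32 1 = 0 ∧ deriv D32 1 = 0 := by
  have hD : ContDiffOn ℝ 1 D32 (Ioi 0) := contDiffOn_D32
  have hderiv_one : deriv D32 1 = 0 := hasDerivAt_D32_one.deriv
  have h_nhds : Ioi (0 : ℝ) ∈ nhds 1 := Ioi_mem_nhds one_pos
  refine ⟨?_, ?_, D32_one, hderiv_one⟩
  · rw [← D32_one]
    exact (hD.continuousOn.continuousAt h_nhds).continuousWithinAt
  · rw [← hderiv_one]
    exact ((hD.continuousOn_deriv_of_isOpen isOpen_Ioi le_rfl).continuousAt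
      h_nhds).continuousWithinAt
end
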